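/- arXiv:2305.09766 — 10 statements merged into one kernel-verified Lean document; each statement's English description precedes it below -/
import Mathlib

section
/- Let X and E be topological spaces and let A : X → E × [0,∞) be a homeomorphism. Let S ⊆ X be a closed set. Define f : E → [0,∞] by f(ξ) = inf { a ∈ [0,∞) : A⁻¹(ξ,a) ∈ S }, with the convention f(ξ) = ∞ if no such a exists (the infimum is taken in the extended half-line [0,∞]). Then f is lower semicontinuous on E. -/
open scoped ENNReal NNReal

/-- **Lower semicontinuity of the optimal stopping boundary** (Proposition 2.2, case η = 1).

`X` and `E` are topological spaces, `A : X ≃ₜ E × [0,∞)` is a homeomorphism (the coordinate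
change `(Ξ, α)`), and `S ⊆ X` is closed (the stopping region at a fixed time).  The boundary
`f : E → [0,∞]`, `f ξ = inf { a ∈ [0,∞) : A⁻¹(ξ, a) ∈ S }` (with `inf ∅ = ∞` in `ℝ≥0∞`),
is lower semicontinuous. -/
theorem boundary_lowerSemicontinuous {X E : Type*} [TopologicalSpace X] [TopologicalSpace E]
    (A : X ≃ₜ E × ℝ≥0) (S : Set X) (hS : IsClosed S) :
    LowerSemicontinuous fun ξ : E =>
      sInf {a : ℝ≥0∞ | ∃ b : ℝ≥0, (b : ℝ≥0∞) = a ∧ A.symm (ξ, b) ∈ S} := by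
  intro ξ₀ y hy
  obtain ⟨y', hyy', hy'f⟩ := exists_between hy
  have hy'top : y' ≠ ⊤ := (hy'f.trans_le le_top).ne
  set c := y'.toNNReal with hc
  have hcy' : (c : ℝ≥0∞) = y' := ENNReal.coe_toNNReal hy'top
  set C : Set (E × ℝ≥0) := A.symm ⁻¹' S with hCdef
  have hC : IsClosed C := hS.preimage A.symm.continuous
  have hsub : ({ξ₀} ×ˢ Set.Iic c) ⊆ Cᶜ := by
    rintro ⟨ξ, b⟩ ⟨hξ, hb⟩ hmem
    rw [show ξ = ξ₀ from hξ] at hmem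
    have hle : sInf {a : ℝ≥0∞ | ∃ b' : ℝ≥0, (b' : ℝ≥0∞) = a ∧ A.symm (ξ₀, b') ∈ S} ≤ b :=
      sInf_le ⟨b, rfl, hmem⟩
    have : (b : ℝ≥0∞) ≤ y' := hcy' ▸ ENNReal.coe_le_coe.2 hb
    exact absurd (hle.trans this) hy'f.not_ge
  have hIic : IsCompact (Set.Iic c) := by
    rw [← Set.Icc_bot]; exact isCompact_Icc
  obtain ⟨U, V, hU, hV, hξ₀U, hIicV, hUV⟩ :=
    generalized_tube_lemma isCompact_singleton hIic hC.isOpen_compl hsub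
  filter_upwards [hU.mem_nhds (hξ₀U rfl)] with ξ hξ
  refine lt_of_lt_of_le hyy' (le_sInf ?_)
  rintro a ⟨b, rfl, hmem⟩
  by_contra h
  push_neg at h
  have hbc : b ≤ c := by
    have : (b : ℝ≥0∞) ≤ (c : ℝ≥0∞) := hcy' ▸ h.le
    exact_mod_cast this
  exact hUV ⟨hξ, hIicV (Set.mem_Iic.mpr hbc)⟩ hmem
end

section
/- The classical and relaxed optimal stopping problems have the same optimal value: sup over all 𝒯-valued stopping times τ of E[Y_τ] equals sup over all relaxed stopping rules μ = (P_t)_{t∈𝒯} of E[Σ_{t∈𝒯} P_t Y_t]. -/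
/-!
A stopping time `τ` is the relaxed rule `P t = 1{τ = t}`, so every classical value is a relaxed
one. Conversely a relaxed rule is a mixture of stopping times: for `u ∈ (0, 1]` let `τ_u` be the
first date at which the cumulative sum `∑_{s ≤ t} P s` reaches `u`. Since
`{τ_u ≤ t} = {u ≤ ∑_{s ≤ t} P s}`, each `τ_u` is a stopping time, and for fixed `ω` the set of
`u` with `τ_u ω = t` is an interval of length `P t ω`. Fubini then gives
`E[∑ t, P t * Y t] = ∫₀¹ E[Y_{τ_u}] du ≤ sup_τ E[Y_τ]`. Both suprema are finite because all
values are bounded by `∑ t, E|Y t|`.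
-/

open MeasureTheory Finset

noncomputable section Quantile

variable {T : Type*} [Fintype T] [LinearOrder T] (p : T → ℝ)

def cumSum (t : T) : ℝ := ∑ s with s ≤ t, p s

def cumSumBefore (t : T) : ℝ := ∑ s with s < t, p s

variable {p}

lemma cumSum_le_cumSumBefore (hp : 0 ≤ p) {s t : T} (hst : s < t) :
    cumSum p s ≤ cumSumBefore p t :=
  sum_le_sum_of_subset_of_nonneg (monotone_filter_right _ fun _ _ h => h.trans_lt hst)
    fun r _ _ => hp r

lemma cumSum_mono (hp : 0 ≤ p) : Monotone (cumSum p) := fun _ _ hst =>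
  sum_le_sum_of_subset_of_nonneg (monotone_filter_right _ fun _ _ h => h.trans hst)
    fun r _ _ => hp r

lemma cumSumBefore_nonneg (hp : 0 ≤ p) (t : T) : 0 ≤ cumSumBefore p t :=
  sum_nonneg fun s _ => hp s

lemma cumSum_le_sum (hp : 0 ≤ p) (t : T) : cumSum p t ≤ ∑ s, p s :=
  sum_le_sum_of_subset_of_nonneg (filter_subset _ _) fun s _ _ => hp s

lemma cumSum_eq_cumSumBefore_add (t : T) : cumSum p t = cumSumBefore p t + p t := by
  have : univ.filter (· ≤ t) = insert t (univ.filter (· < t)) := by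
    ext s
    simp [le_iff_lt_or_eq, or_comm]
  rw [cumSum, cumSumBefore, this, sum_insert (by simp), add_comm]

lemma exists_cumSum_eq_sum [Nonempty T] (p : T → ℝ) : ∃ t, cumSum p t = ∑ s, p s := by
  obtain ⟨t, ht⟩ : ∃ t : T, ∀ s, s ≤ t := Finite.exists_max id
  exact ⟨t, by rw [cumSum, filter_true_of_mem fun s _ => ht s]⟩

lemma cumSumBefore_lt_of_forall_cumSum_lt {u : ℝ} (hu : 0 < u) {t : T}
    (h : ∀ s < t, cumSum p s < u) : cumSumBefore p t < u := by
  rcases (univ.filter (· < t)).eq_empty_or_nonempty with hempty | hne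
  · rwa [cumSumBefore, hempty, sum_empty]
  · have hmax := mem_filter.mp (max'_mem _ hne)
    suffices cumSumBefore p t = cumSum p (max' _ hne) from this ▸ h _ hmax.2
    refine sum_congr (ext fun s => ?_) fun _ _ => rfl
    simp only [mem_filter_univ]
    exact ⟨fun hs => le_max' _ s (by simpa using hs), fun hs => hs.trans_lt hmax.2⟩

variable (p) in
/-- Equals `y (quantile p u)` for `u ∈ (0, ∑ t, p t]`, but is visibly jointly measurable in `u`
and the data `p`, `y`. -/
def layerSum (y : T → ℝ) (u : ℝ) : ℝ :=
  ∑ t, (Set.Ioc (cumSumBefore p t) (cumSum p t)).indicator (fun _ => y t) u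

lemma abs_layerSum_le (y : T → ℝ) (u : ℝ) : |layerSum p y u| ≤ ∑ t, |y t| :=
  (abs_sum_le_sum_abs _ _).trans <| sum_le_sum fun t _ => by
    simpa only [Real.norm_eq_abs] using norm_indicator_le_norm_self (fun _ => y t) u

lemma integral_layerSum (hp : 0 ≤ p) (y : T → ℝ) :
    ∫ u in Set.Ioc 0 (∑ s, p s), layerSum p y u = ∑ t, p t * y t := by
  unfold layerSum
  rw [integral_finsetSum _ fun t _ => (integrable_const (y t)).indicator measurableSet_Ioc]
  refine sum_congr rfl fun t _ => ?_
  have hsub : Set.Ioc (cumSumBefore p t) (cumSum p t) ⊆ Set.Ioc 0 (∑ s, p s) :=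
    Set.Ioc_subset_Ioc (cumSumBefore_nonneg hp t) (cumSum_le_sum hp t)
  have hlen : cumSumBefore p t ≤ cumSum p t :=
    (cumSum_eq_cumSumBefore_add t).symm ▸ le_add_of_nonneg_right (hp t)
  rw [integral_indicator measurableSet_Ioc, Measure.restrict_restrict measurableSet_Ioc,
    Set.inter_eq_left.mpr hsub, setIntegral_const, Real.volume_real_Ioc_of_le hlen,
    cumSum_eq_cumSumBefore_add, smul_eq_mul, add_sub_cancel_left]

variable [Nonempty T]

variable (p) in
def quantile (u : ℝ) : T :=
  if h : (univ.filter (u ≤ cumSum p ·)).Nonempty then min' _ h else Classical.arbitrary T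

lemma quantile_le_iff (hp : 0 ≤ p) {u : ℝ} (hu : u ≤ ∑ s, p s) {t : T} :
    quantile p u ≤ t ↔ u ≤ cumSum p t := by
  obtain ⟨t₁, ht₁⟩ := exists_cumSum_eq_sum p
  have hne : (univ.filter (u ≤ cumSum p ·)).Nonempty := ⟨t₁, by simpa [ht₁]⟩
  rw [quantile, dif_pos hne]
  refine ⟨fun h => ?_, fun h => min'_le _ _ (by simpa)⟩
  exact (by simpa using min'_mem _ hne : u ≤ _).trans (cumSum_mono hp h)

lemma quantile_eq_iff (hp : 0 ≤ p) {u : ℝ} (hu : u ∈ Set.Ioc 0 (∑ s, p s)) {t : T} :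
    quantile p u = t ↔ u ∈ Set.Ioc (cumSumBefore p t) (cumSum p t) := by
  have hle : ∀ {s}, quantile p u ≤ s ↔ u ≤ cumSum p s := quantile_le_iff hp hu.2
  constructor
  · rintro rfl
    refine ⟨cumSumBefore_lt_of_forall_cumSum_lt hu.1 fun s hs => ?_, hle.1 le_rfl⟩
    exact lt_of_not_ge fun h => (hle.2 h).not_gt hs
  · rintro ⟨hbefore, hcum⟩
    refine le_antisymm (hle.2 hcum) (le_of_not_gt fun hlt => ?_)
    exact (hle.1 le_rfl |>.trans (cumSum_le_cumSumBefore hp hlt)).not_gt hbefore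

lemma layerSum_eq_apply_quantile (hp : 0 ≤ p) {u : ℝ} (hu : u ∈ Set.Ioc 0 (∑ s, p s))
    (y : T → ℝ) : layerSum p y u = y (quantile p u) := by
  classical
  simp only [layerSum, Set.indicator_apply, ← quantile_eq_iff hp hu, sum_ite_eq, mem_univ,
    if_true]

end Quantile

section Stopping

variable {T Ω : Type*}

def stoppingValues [LE T] [MeasurableSpace Ω] (𝓕 : T → MeasurableSpace Ω) (Q : Measure Ω)
    (Y : T → Ω → ℝ) : Set ℝ :=
  {r | ∃ τ : Ω → T, (∀ t, MeasurableSet[𝓕 t] {ω | τ ω ≤ t}) ∧ r = ∫ ω, Y (τ ω) ω ∂Q}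

def relaxedValues [Fintype T] [MeasurableSpace Ω] (𝓕 : T → MeasurableSpace Ω) (Q : Measure Ω)
    (Y : T → Ω → ℝ) : Set ℝ :=
  {r | ∃ P : T → Ω → ℝ, (∀ t, Measurable[𝓕 t] (P t)) ∧
    (∀ t ω, 0 ≤ P t ω) ∧ (∀ t ω, P t ω ≤ 1) ∧ (∀ ω, ∑ t, P t ω = 1) ∧
    r = ∫ ω, (∑ t, P t ω * Y t ω) ∂Q}

variable {𝓕 : T → MeasurableSpace Ω} {P Y : T → Ω → ℝ}

lemma bddAbove_relaxedValues [Fintype T] [MeasurableSpace Ω] {Q : Measure Ω}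
    (hint : ∀ t, Integrable (Y t) Q) : BddAbove (relaxedValues 𝓕 Q Y) := by
  refine ⟨∫ ω, ∑ t, |Y t ω| ∂Q, ?_⟩
  rintro r ⟨P, -, hP0, hP1, -, rfl⟩
  refine (Real.le_norm_self _).trans <| norm_integral_le_of_norm_le
    (integrable_finsetSum _ fun t _ => (hint t).abs) (.of_forall fun ω => ?_)
  refine (Real.norm_eq_abs _ ▸ abs_sum_le_sum_abs _ _).trans <| sum_le_sum fun t _ => ?_
  rw [abs_mul, abs_of_nonneg (hP0 t ω)]
  exact mul_le_of_le_one_left (abs_nonneg _) (hP1 t ω)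

variable [LinearOrder T]

lemma stoppingValues_nonempty [Nonempty T] [MeasurableSpace Ω] (Q : Measure Ω) :
    (stoppingValues 𝓕 Q Y).Nonempty :=
  ⟨_, fun _ => Classical.arbitrary T, fun _ => .const _, rfl⟩

lemma measurableSet_eq_of_forall_measurableSet_le [Countable T] [m0 : MeasurableSpace Ω]
    (hmono : Monotone 𝓕) (hle : ∀ t, 𝓕 t ≤ m0) {τ : Ω → T}
    (hτ : ∀ t, MeasurableSet[𝓕 t] {ω | τ ω ≤ t}) (t : T) :
    MeasurableSet[𝓕 t] {ω | τ ω = t} := by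
  have hstop : IsStoppingTime (⟨𝓕, hmono, hle⟩ : Filtration T m0) (fun ω => (τ ω : WithTop T)) :=
    fun t => by simpa using hτ t
  simpa using hstop.measurableSet_eq_of_countable t

lemma stoppingValues_subset_relaxedValues [Fintype T] [m0 : MeasurableSpace Ω] {Q : Measure Ω}
    (hmono : Monotone 𝓕) (hle : ∀ t, 𝓕 t ≤ m0) :
    stoppingValues 𝓕 Q Y ⊆ relaxedValues 𝓕 Q Y := by
  classical
  rintro r ⟨τ, hτ, rfl⟩
  refine ⟨fun t ω => if τ ω = t then 1 else 0, fun t => ?_, fun t ω => ?_, fun t ω => ?_,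
    fun ω => by simp, by simp⟩
  · exact measurable_const.ite (measurableSet_eq_of_forall_measurableSet_le hmono hle hτ t)
      measurable_const
  all_goals dsimp only; split_ifs <;> norm_num

variable [Fintype T]

lemma measurable_layerSum [MeasurableSpace Ω] (hPm : ∀ t, Measurable (P t))
    (hYm : ∀ t, Measurable (Y t)) :
    Measurable fun x : ℝ × Ω => layerSum (P · x.2) (Y · x.2) x.1 := by
  have hcum : ∀ t, Measurable fun ω => cumSum (P · ω) t := fun t =>
    Finset.measurable_sum _ fun s _ => hPm s
  have hbefore : ∀ t, Measurable fun ω => cumSumBefore (P · ω) t := fun t =>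
    Finset.measurable_sum _ fun s _ => hPm s
  refine Finset.measurable_sum _ fun t _ => ?_
  simp only [Set.indicator_apply, Set.mem_Ioc]
  refine Measurable.ite ?_ ((hYm t).comp measurable_snd) measurable_const
  exact (measurableSet_lt ((hbefore t).comp measurable_snd) measurable_fst).inter
    (measurableSet_le measurable_fst ((hcum t).comp measurable_snd))

variable [Nonempty T]

lemma measurableSet_quantile_le (hmono : Monotone 𝓕) (hPm : ∀ t, Measurable[𝓕 t] (P t))
    (hP0 : ∀ t ω, 0 ≤ P t ω) (hPsum : ∀ ω, ∑ t, P t ω = 1) {u : ℝ} (hu : u ≤ 1) (t : T) :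
    MeasurableSet[𝓕 t] {ω | quantile (P · ω) u ≤ t} := by
  have hset : {ω | quantile (P · ω) u ≤ t} = {ω | u ≤ cumSum (P · ω) t} := by
    ext ω
    exact quantile_le_iff (hP0 · ω) ((hPsum ω).symm ▸ hu)
  rw [hset]
  exact measurableSet_le measurable_const <|
    Finset.measurable_sum _ fun s hs => (hPm s).mono (hmono (mem_filter.mp hs).2) le_rfl

lemma integral_relaxed_le_sSup_stoppingValues [m0 : MeasurableSpace Ω] {Q : Measure Ω}
    [IsFiniteMeasure Q] (hmono : Monotone 𝓕) (hle : ∀ t, 𝓕 t ≤ m0)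
    (hadp : ∀ t, Measurable[𝓕 t] (Y t))
    (hint : ∀ t, Integrable (Y t) Q) (hPm : ∀ t, Measurable[𝓕 t] (P t))
    (hP0 : ∀ t ω, 0 ≤ P t ω) (hPsum : ∀ ω, ∑ t, P t ω = 1)
    (hbdd : BddAbove (stoppingValues 𝓕 Q Y)) :
    ∫ ω, (∑ t, P t ω * Y t ω) ∂Q ≤ sSup (stoppingValues 𝓕 Q Y) := by
  set H : ℝ → Ω → ℝ := fun u ω => layerSum (P · ω) (Y · ω) u
  have hH : Integrable (Function.uncurry H) ((volume.restrict (Set.Ioc 0 1)).prod Q) := by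
    have hdom : Integrable (fun ω => ∑ t, |Y t ω|) Q :=
      integrable_finsetSum _ fun t _ => (hint t).abs
    refine (hdom.comp_snd _).mono'
      (measurable_layerSum (fun t => (hPm t).mono (hle t) le_rfl)
        (fun t => (hadp t).mono (hle t) le_rfl)).aestronglyMeasurable (.of_forall fun x => ?_)
    exact abs_layerSum_le (Y · x.2) x.1
  have hslice : ∀ u ∈ Set.Ioc (0 : ℝ) 1, ∫ ω, H u ω ∂Q ∈ stoppingValues 𝓕 Q Y := by
    intro u hu
    refine ⟨fun ω => quantile (P · ω) u, measurableSet_quantile_le hmono hPm hP0 hPsum hu.2,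
      integral_congr_ae (.of_forall fun ω => ?_)⟩
    exact layerSum_eq_apply_quantile (hP0 · ω) ((hPsum ω).symm ▸ hu) _
  calc ∫ ω, (∑ t, P t ω * Y t ω) ∂Q = ∫ ω, (∫ u in Set.Ioc 0 1, H u ω) ∂Q := by
        refine integral_congr_ae (.of_forall fun ω => ?_)
        simpa only [hPsum ω] using (integral_layerSum (hP0 · ω) (Y · ω)).symm
    _ = ∫ u in Set.Ioc 0 1, ∫ ω, H u ω ∂Q := (integral_integral_swap hH).symm
    _ ≤ ∫ _ in Set.Ioc (0 : ℝ) 1, sSup (stoppingValues 𝓕 Q Y) :=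
        setIntegral_mono_on hH.integral_prod_left (integrableOn_const measure_Ioc_lt_top.ne)
          measurableSet_Ioc fun u hu => le_csSup hbdd (hslice u hu)
    _ = sSup (stoppingValues 𝓕 Q Y) := by simp

end Stopping

/-- **Classical and relaxed optimal stopping have the same value** (Proposition 3.1, first
assertion).

`T` is a finite nonempty linearly ordered set of exercise dates, `(Ω, 𝓐, Q)` a probability
space with a filtration `𝓕` (monotone family of sub-σ-algebras of the ambient σ-algebra),
and `(Y t)` an adapted family of integrable rewards.  The supremum of `E[Y_τ]` over all
`T`-valued stopping times `τ` equals the supremum of `E[Σ_t P_t Y_t]` over all relaxed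
stopping rules `μ = (P_t)` (adapted, `0 ≤ P_t ≤ 1`, `Σ_t P_t = 1`). -/
theorem value_classical_eq_value_relaxed
    {T Ω : Type*} [Fintype T] [Nonempty T] [LinearOrder T]
    [m0 : MeasurableSpace Ω] (Q : Measure Ω) [IsProbabilityMeasure Q]
    (𝓕 : T → MeasurableSpace Ω) (hmono : Monotone 𝓕) (hle : ∀ t, 𝓕 t ≤ m0)
    (Y : T → Ω → ℝ) (hadp : ∀ t, Measurable[𝓕 t] (Y t))
    (hint : ∀ t, Integrable (Y t) Q) :
    sSup {r : ℝ | ∃ τ : Ω → T,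
        (∀ t, MeasurableSet[𝓕 t] {ω | τ ω ≤ t}) ∧
        r = ∫ ω, Y (τ ω) ω ∂Q} =
    sSup {r : ℝ | ∃ P : T → Ω → ℝ,
        (∀ t, Measurable[𝓕 t] (P t)) ∧
        (∀ t ω, 0 ≤ P t ω) ∧ (∀ t ω, P t ω ≤ 1) ∧
        (∀ ω, ∑ t, P t ω = 1) ∧
        r = ∫ ω, (∑ t, P t ω * Y t ω) ∂Q} := by
  change sSup (stoppingValues 𝓕 Q Y) = sSup (relaxedValues 𝓕 Q Y)
  have hsub : stoppingValues 𝓕 Q Y ⊆ relaxedValues 𝓕 Q Y :=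
    stoppingValues_subset_relaxedValues hmono hle
  have hbdd : BddAbove (relaxedValues 𝓕 Q Y) := bddAbove_relaxedValues hint
  have hne : (stoppingValues 𝓕 Q Y).Nonempty := stoppingValues_nonempty Q
  refine le_antisymm (csSup_le_csSup hbdd hne hsub) (csSup_le (hne.mono hsub) ?_)
  rintro r ⟨P, hPm, hP0, -, hPsum, rfl⟩
  exact integral_relaxed_le_sSup_stoppingValues hmono hle hadp hint hPm hP0 hPsum
    (hbdd.mono hsub)
end

section
/- There exists a 𝒯-valued stopping time τ⋄ whose value attains the relaxed optimal value: E[Y_{τ⋄}] = sup over all relaxed stopping rules μ = (P_t)_{t∈𝒯} of E[Σ_{t∈𝒯} P_t Y_t]. In particular the supremum over relaxed stopping rules is attained by a Dirac rule δ_{τ⋄}. -/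
/-!
Let `Z` be the Snell envelope of `Y`: `Z_t = Y_t` at the last date and
`Z_t = max (Y_t, E[Z_{t+1} | 𝓕_t])` before, and let `τ` be the first date with `Z_t = Y_t`.

`Z` dominates `Y` and is a supermartingale. For a relaxed rule `P` the tail weight
`∑_{s > t} P_s = 1 - ∑_{s ≤ t} P_s` is `𝓕_t`-measurable, so backward induction gives
`E[∑_{s ≥ t} P_s Y_s] ≤ E[(∑_{s ≥ t} P_s) Z_t]`; at the first date the value of `P` is at most
`E[Z_first]`. Strictly before `τ` the envelope equals its one-step conditional expectation, so
the same backward induction turns into an equality for `τ`: `E[Y_τ] = E[Z_first]`. Finally `τ`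
is itself a relaxed rule, through the indicators of `{τ = t}`.
-/

open MeasureTheory Order

theorem integral_mul_condExp_of_stronglyMeasurable {Ω : Type*} {m m₀ : MeasurableSpace Ω}
    {μ : Measure Ω} (hm : m ≤ m₀) [SigmaFinite (μ.trim hm)] {f g : Ω → ℝ}
    (hf : StronglyMeasurable[m] f) (hfg : Integrable (f * g) μ) (hg : Integrable g μ) :
    ∫ ω, f ω * μ[g | m] ω ∂μ = ∫ ω, f ω * g ω ∂μ :=
  calc ∫ ω, f ω * μ[g | m] ω ∂μ = ∫ ω, μ[f * g | m] ω ∂μ :=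
        integral_congr_ae (condExp_mul_of_stronglyMeasurable_left hf hfg hg).symm
    _ = ∫ ω, f ω * g ω ∂μ := integral_condExp hm

theorem integral_mul_le_of_condExp_le {Ω : Type*} {m m₀ : MeasurableSpace Ω}
    {μ : Measure Ω} [IsFiniteMeasure μ] (hm : m ≤ m₀) {w f g : Ω → ℝ} {C : ℝ}
    (hw : StronglyMeasurable[m] w) (hw0 : ∀ ω, 0 ≤ w ω) (hwC : ∀ ω, w ω ≤ C)
    (hf : Integrable f μ) (hg : Integrable g μ) (hfg : μ[f | m] ≤ᵐ[μ] g) :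
    ∫ ω, w ω * f ω ∂μ ≤ ∫ ω, w ω * g ω ∂μ := by
  have hw_bound : ∀ᵐ ω ∂μ, ‖w ω‖ ≤ C :=
    ae_of_all _ fun ω => by rw [Real.norm_of_nonneg (hw0 ω)]; exact hwC ω
  have hw_meas : AEStronglyMeasurable w μ := (hw.mono hm).aestronglyMeasurable
  calc ∫ ω, w ω * f ω ∂μ = ∫ ω, w ω * μ[f | m] ω ∂μ :=
        (integral_mul_condExp_of_stronglyMeasurable hm hw (hf.bdd_mul hw_meas hw_bound) hf).symm
    _ ≤ ∫ ω, w ω * g ω ∂μ :=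
        integral_mono_ae (integrable_condExp.bdd_mul hw_meas hw_bound)
          (hg.bdd_mul hw_meas hw_bound)
          (hfg.mono fun ω h => mul_le_mul_of_nonneg_left h (hw0 ω))

theorem Finset.sum_filter_le_eq_add_sum_filter_lt {T M : Type*} [Fintype T] [LinearOrder T]
    [AddCommMonoid M] (f : T → M) (t : T) :
    ∑ s with t ≤ s, f s = f t + ∑ s with t < s, f s := by
  have h : Finset.univ.filter (t ≤ ·) = insert t (Finset.univ.filter (t < ·)) := by
    ext s
    simp [le_iff_eq_or_lt, eq_comm]
  rw [h, Finset.sum_insert (by simp)]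

structure IsRelaxedStoppingRule {T Ω : Type*} [Fintype T] (𝓕 : T → MeasurableSpace Ω)
    (P : T → Ω → ℝ) : Prop where
  measurable : ∀ t, Measurable[𝓕 t] (P t)
  nonneg : ∀ t ω, 0 ≤ P t ω
  sum_eq_one : ∀ ω, ∑ t, P t ω = 1

namespace IsRelaxedStoppingRule

variable {T Ω : Type*} [Fintype T] {𝓕 : T → MeasurableSpace Ω} {P : T → Ω → ℝ}

theorem sum_nonneg (hP : IsRelaxedStoppingRule 𝓕 P) (s : Finset T) (ω : Ω) :
    0 ≤ ∑ t ∈ s, P t ω :=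
  Finset.sum_nonneg fun t _ => hP.nonneg t ω

theorem sum_le_one (hP : IsRelaxedStoppingRule 𝓕 P) (s : Finset T) (ω : Ω) :
    ∑ t ∈ s, P t ω ≤ 1 :=
  hP.sum_eq_one ω ▸ Finset.sum_le_univ_sum_of_nonneg fun t => hP.nonneg t ω

theorem le_one (hP : IsRelaxedStoppingRule 𝓕 P) (t : T) (ω : Ω) : P t ω ≤ 1 := by
  simpa using hP.sum_le_one {t} ω

theorem measurable_sum_filter_lt [LinearOrder T] (hP : IsRelaxedStoppingRule 𝓕 P)
    (hmono : Monotone 𝓕) (t : T) :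
    Measurable[𝓕 t] fun ω => ∑ s with t < s, P s ω := by
  have h : (fun ω => ∑ s with t < s, P s ω) = fun ω => 1 - ∑ s with ¬t < s, P s ω := by
    funext ω
    rw [eq_sub_iff_add_eq, Finset.sum_filter_add_sum_filter_not, hP.sum_eq_one]
  rw [h]
  refine measurable_const.sub (Finset.measurable_sum _ fun s hs => ?_)
  exact (hP.measurable s).mono (hmono (not_lt.mp (Finset.mem_filter.mp hs).2)) le_rfl

theorem integrable_sum_mul [m₀ : MeasurableSpace Ω] {Q : Measure Ω}
    (hP : IsRelaxedStoppingRule 𝓕 P) (hle : ∀ t, 𝓕 t ≤ m₀) (S : Finset T) {f : Ω → ℝ}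
    (hf : Integrable f Q) : Integrable (fun ω => (∑ t ∈ S, P t ω) * f ω) Q := by
  refine hf.bdd_mul (c := 1) (Finset.measurable_sum S fun t _ =>
    (hP.measurable t).mono (hle t) le_rfl).aestronglyMeasurable (ae_of_all _ fun ω => ?_)
  rw [Real.norm_of_nonneg (hP.sum_nonneg S ω)]
  exact hP.sum_le_one S ω

theorem integrable_mul [m₀ : MeasurableSpace Ω] {Q : Measure Ω}
    (hP : IsRelaxedStoppingRule 𝓕 P) (hle : ∀ t, 𝓕 t ≤ m₀) (t : T) {f : Ω → ℝ}
    (hf : Integrable f Q) : Integrable (fun ω => P t ω * f ω) Q := by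
  simpa using hP.integrable_sum_mul hle {t} hf

end IsRelaxedStoppingRule

section StoppingTime

variable {T Ω : Type*} [LinearOrder T] {𝓕 : T → MeasurableSpace Ω} {τ : Ω → T}

theorem measurableSet_eq_of_measurableSet_le [Countable T] (hmono : Monotone 𝓕)
    (hτ : ∀ t, MeasurableSet[𝓕 t] {ω | τ ω ≤ t}) (t : T) :
    MeasurableSet[𝓕 t] {ω | τ ω = t} := by
  have hset : {ω | τ ω = t} = {ω | τ ω ≤ t} \ ⋃ (s : T) (_ : s < t), {ω | τ ω ≤ s} := by
    ext ω
    simp only [Set.mem_ofPred_eq, Set.mem_sdiff, Set.mem_iUnion, exists_prop, not_exists, not_and]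
    exact ⟨fun h => ⟨h.le, fun s hst hs => (h ▸ hs).not_gt hst⟩,
      fun h => h.1.eq_of_not_lt fun hlt => h.2 _ hlt le_rfl⟩
  rw [hset]
  exact (hτ t).diff (.iUnion fun s => .iUnion fun hst => hmono hst.le _ (hτ s))

theorem setIntegral_le_eq_add [MeasurableSpace Ω] {Q : Measure Ω} {f : Ω → ℝ} {t : T}
    (hτ : MeasurableSet {ω | t < τ ω}) (hf : Integrable f Q) :
    ∫ ω in {ω | t ≤ τ ω}, f ω ∂Q
      = ∫ ω in {ω | τ ω = t}, f ω ∂Q + ∫ ω in {ω | t < τ ω}, f ω ∂Q := by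
  have hset : {ω | t ≤ τ ω} = {ω | τ ω = t} ∪ {ω | t < τ ω} := by
    ext ω
    simp [le_iff_eq_or_lt, eq_comm]
  rw [hset, setIntegral_union _ hτ hf.integrableOn hf.integrableOn]
  exact Set.disjoint_left.mpr fun ω (h₁ : τ ω = t) (h₂ : t < τ ω) => h₂.ne' h₁

variable [Fintype T]

theorem sum_indicator_one_mul_eq_apply (Y : T → Ω → ℝ) (ω : Ω) :
    ∑ t, {ω | τ ω = t}.indicator 1 ω * Y t ω = Y (τ ω) ω := by
  classical
  simp [Set.indicator_apply]

theorem integrable_apply_of_measurableSet_eq [MeasurableSpace Ω] {Q : Measure Ω}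
    {Y : T → Ω → ℝ} (hτ : ∀ t, MeasurableSet {ω | τ ω = t}) (hint : ∀ t, Integrable (Y t) Q) :
    Integrable (fun ω => Y (τ ω) ω) Q := by
  simp_rw [← sum_indicator_one_mul_eq_apply Y]
  refine integrable_finsetSum _ fun t _ => ?_
  convert (hint t).indicator (hτ t) using 1
  ext ω
  simp [Set.indicator_apply]

theorem isRelaxedStoppingRule_indicator (hτ : ∀ t, MeasurableSet[𝓕 t] {ω | τ ω = t}) :
    IsRelaxedStoppingRule 𝓕 fun t => {ω | τ ω = t}.indicator 1 where
  measurable t := measurable_const.indicator (hτ t)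
  nonneg _ ω := Set.indicator_nonneg (fun _ _ => zero_le_one) ω
  sum_eq_one ω := by simpa using sum_indicator_one_mul_eq_apply (fun _ _ => (1 : ℝ)) ω

end StoppingTime

section RelaxedUpperBound

variable {T Ω : Type*} [Fintype T] [LinearOrder T] [SuccOrder T] [m₀ : MeasurableSpace Ω]
  {Q : Measure Ω} [IsFiniteMeasure Q] {𝓕 : T → MeasurableSpace Ω} {Y Z P : T → Ω → ℝ}

theorem integral_tail_sum_mul_le (hmono : Monotone 𝓕) (hle : ∀ t, 𝓕 t ≤ m₀)
    (hP : IsRelaxedStoppingRule 𝓕 P) (hint : ∀ t, Integrable (Y t) Q)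
    (hZint : ∀ t, Integrable (Z t) Q) (hYZ : ∀ t, Y t ≤ᵐ[Q] Z t)
    (hsuper : ∀ t, ¬IsMax t → Q[Z (succ t) | 𝓕 t] ≤ᵐ[Q] Z t) (t : T) :
    ∫ ω, ∑ s with t ≤ s, P s ω * Y s ω ∂Q ≤ ∫ ω, (∑ s with t ≤ s, P s ω) * Z t ω ∂Q := by
  induction t using WellFoundedGT.induction with
  | _ t ih =>
  have hstrict : ∫ ω, ∑ s with t < s, P s ω * Y s ω ∂Q
      ≤ ∫ ω, (∑ s with t < s, P s ω) * Z t ω ∂Q := by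
    by_cases ht : IsMax t
    · simp [ht.not_lt]
    · have hfilter : Finset.univ.filter (t < ·) = Finset.univ.filter (succ t ≤ ·) :=
        Finset.filter_congr fun s _ => (succ_le_iff_of_not_isMax ht).symm
      calc ∫ ω, ∑ s with t < s, P s ω * Y s ω ∂Q
          ≤ ∫ ω, (∑ s with t < s, P s ω) * Z (succ t) ω ∂Q := by
            rw [hfilter]
            exact ih _ (lt_succ_of_not_isMax ht)
        _ ≤ ∫ ω, (∑ s with t < s, P s ω) * Z t ω ∂Q :=
            integral_mul_le_of_condExp_le (hle t)
              (hP.measurable_sum_filter_lt hmono t).stronglyMeasurable (hP.sum_nonneg _)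
              (hP.sum_le_one _) (hZint _) (hZint t) (hsuper t ht)
  calc ∫ ω, ∑ s with t ≤ s, P s ω * Y s ω ∂Q
      = ∫ ω, P t ω * Y t ω ∂Q + ∫ ω, ∑ s with t < s, P s ω * Y s ω ∂Q := by
        simp_rw [Finset.sum_filter_le_eq_add_sum_filter_lt _ t]
        exact integral_add (hP.integrable_mul hle t (hint t))
          (integrable_finsetSum _ fun s _ => hP.integrable_mul hle s (hint s))
    _ ≤ ∫ ω, P t ω * Z t ω ∂Q + ∫ ω, (∑ s with t < s, P s ω) * Z t ω ∂Q := by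
        refine add_le_add (integral_mono_ae (hP.integrable_mul hle t (hint t))
          (hP.integrable_mul hle t (hZint t))
          ((hYZ t).mono fun ω h => mul_le_mul_of_nonneg_left h (hP.nonneg t ω))) hstrict
    _ = ∫ ω, (∑ s with t ≤ s, P s ω) * Z t ω ∂Q := by
        simp_rw [Finset.sum_filter_le_eq_add_sum_filter_lt _ t, add_mul]
        exact (integral_add (hP.integrable_mul hle t (hZint t))
          (hP.integrable_sum_mul hle _ (hZint t))).symm

theorem integral_sum_mul_le_of_supermartingale (hmono : Monotone 𝓕) (hle : ∀ t, 𝓕 t ≤ m₀)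
    (hP : IsRelaxedStoppingRule 𝓕 P) (hint : ∀ t, Integrable (Y t) Q)
    (hZint : ∀ t, Integrable (Z t) Q) (hYZ : ∀ t, Y t ≤ᵐ[Q] Z t)
    (hsuper : ∀ t, ¬IsMax t → Q[Z (succ t) | 𝓕 t] ≤ᵐ[Q] Z t) {t₀ : T} (ht₀ : ∀ t, t₀ ≤ t) :
    ∫ ω, ∑ t, P t ω * Y t ω ∂Q ≤ ∫ ω, Z t₀ ω ∂Q := by
  have h := integral_tail_sum_mul_le hmono hle hP hint hZint hYZ hsuper t₀
  simpa [Finset.filter_true_of_mem fun t _ => ht₀ t, hP.sum_eq_one] using h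

end RelaxedUpperBound

section Snell

variable {T Ω : Type*} [LinearOrder T] [SuccOrder T] [WellFoundedGT T]
  [m₀ : MeasurableSpace Ω] (Q : Measure Ω) (𝓕 : T → MeasurableSpace Ω) (Y : T → Ω → ℝ)

open scoped Classical in
noncomputable def snellEnvelope : T → Ω → ℝ :=
  IsWellFounded.fix (· > ·) fun t Z =>
    if ht : IsMax t then Y t else Y t ⊔ Q[Z (succ t) (lt_succ_of_not_isMax ht) | 𝓕 t]

variable {Q 𝓕 Y} {t : T}

theorem snellEnvelope_of_isMax (ht : IsMax t) : snellEnvelope Q 𝓕 Y t = Y t := by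
  rw [snellEnvelope, IsWellFounded.fix_eq, dif_pos ht]

theorem snellEnvelope_of_not_isMax (ht : ¬IsMax t) :
    snellEnvelope Q 𝓕 Y t = Y t ⊔ Q[snellEnvelope Q 𝓕 Y (succ t) | 𝓕 t] := by
  rw [snellEnvelope, IsWellFounded.fix_eq, dif_neg ht]

theorem le_snellEnvelope (t : T) : Y t ≤ snellEnvelope Q 𝓕 Y t := by
  by_cases ht : IsMax t
  · rw [snellEnvelope_of_isMax ht]
  · rw [snellEnvelope_of_not_isMax ht]
    exact le_sup_left

theorem condExp_succ_le_snellEnvelope (ht : ¬IsMax t) :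
    Q[snellEnvelope Q 𝓕 Y (succ t) | 𝓕 t] ≤ snellEnvelope Q 𝓕 Y t := by
  rw [snellEnvelope_of_not_isMax ht]
  exact le_sup_right

theorem snellEnvelope_eq_condExp_of_ne {ω : Ω} (h : snellEnvelope Q 𝓕 Y t ω ≠ Y t ω) :
    snellEnvelope Q 𝓕 Y t ω = Q[snellEnvelope Q 𝓕 Y (succ t) | 𝓕 t] ω := by
  have ht : ¬IsMax t := fun ht => h (by rw [snellEnvelope_of_isMax ht])
  rw [snellEnvelope_of_not_isMax ht, Pi.sup_apply] at h ⊢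
  exact (max_choice _ _).resolve_left h

theorem measurable_snellEnvelope (hadp : ∀ t, Measurable[𝓕 t] (Y t)) (t : T) :
    Measurable[𝓕 t] (snellEnvelope Q 𝓕 Y t) := by
  by_cases ht : IsMax t
  · rw [snellEnvelope_of_isMax ht]
    exact hadp t
  · rw [snellEnvelope_of_not_isMax ht]
    exact (hadp t).sup stronglyMeasurable_condExp.measurable

theorem integrable_snellEnvelope (hint : ∀ t, Integrable (Y t) Q) (t : T) :
    Integrable (snellEnvelope Q 𝓕 Y t) Q := by
  by_cases ht : IsMax t
  · rw [snellEnvelope_of_isMax ht]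
    exact hint t
  · rw [snellEnvelope_of_not_isMax ht]
    exact (hint t).sup integrable_condExp

end Snell

section OptimalStoppingTime

variable {T Ω : Type*} [LinearOrder T] [SuccOrder T] [Fintype T] [Nonempty T]
  [m₀ : MeasurableSpace Ω] (Q : Measure Ω) (𝓕 : T → MeasurableSpace Ω) (Y : T → Ω → ℝ)

theorem exists_snellEnvelope_eq (ω : Ω) : ∃ t, snellEnvelope Q 𝓕 Y t ω = Y t ω := by
  obtain ⟨t, ht⟩ := Finite.exists_max (id : T → T)
  exact ⟨t, by rw [snellEnvelope_of_isMax (t := t) fun s _ => ht s]⟩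

noncomputable def optimalStoppingTime (ω : Ω) : T :=
  wellFounded_lt.min {t | snellEnvelope Q 𝓕 Y t ω = Y t ω} (exists_snellEnvelope_eq Q 𝓕 Y ω)

variable {Q 𝓕 Y}

theorem snellEnvelope_optimalStoppingTime (ω : Ω) :
    snellEnvelope Q 𝓕 Y (optimalStoppingTime Q 𝓕 Y ω) ω = Y (optimalStoppingTime Q 𝓕 Y ω) ω :=
  wellFounded_lt.min_mem {t | snellEnvelope Q 𝓕 Y t ω = Y t ω} _

theorem optimalStoppingTime_le {t : T} {ω : Ω} (h : snellEnvelope Q 𝓕 Y t ω = Y t ω) :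
    optimalStoppingTime Q 𝓕 Y ω ≤ t :=
  not_lt.mp (wellFounded_lt.not_lt_min {t | snellEnvelope Q 𝓕 Y t ω = Y t ω} h)

theorem snellEnvelope_ne_of_lt_optimalStoppingTime {t : T} {ω : Ω}
    (h : t < optimalStoppingTime Q 𝓕 Y ω) : snellEnvelope Q 𝓕 Y t ω ≠ Y t ω :=
  fun he => (optimalStoppingTime_le he).not_gt h

theorem measurableSet_optimalStoppingTime_le (hmono : Monotone 𝓕)
    (hadp : ∀ t, Measurable[𝓕 t] (Y t)) (t : T) :
    MeasurableSet[𝓕 t] {ω | optimalStoppingTime Q 𝓕 Y ω ≤ t} := by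
  have hset : {ω | optimalStoppingTime Q 𝓕 Y ω ≤ t}
      = ⋃ (s : T) (_ : s ≤ t), {ω | snellEnvelope Q 𝓕 Y s ω = Y s ω} := by
    ext ω
    simp only [Set.mem_ofPred_eq, Set.mem_iUnion, exists_prop]
    exact ⟨fun h => ⟨_, h, snellEnvelope_optimalStoppingTime ω⟩,
      fun ⟨_, hst, hs⟩ => (optimalStoppingTime_le hs).trans hst⟩
  rw [hset]
  exact .iUnion fun s => .iUnion fun hst =>
    hmono hst _ (measurableSet_eq_fun (measurable_snellEnvelope hadp s) (hadp s))

theorem setIntegral_snellEnvelope_eq [IsFiniteMeasure Q] (hmono : Monotone 𝓕)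
    (hle : ∀ t, 𝓕 t ≤ m₀) (hadp : ∀ t, Measurable[𝓕 t] (Y t))
    (hint : ∀ t, Integrable (Y t) Q) (t : T) :
    ∫ ω in {ω | t ≤ optimalStoppingTime Q 𝓕 Y ω}, snellEnvelope Q 𝓕 Y t ω ∂Q
      = ∫ ω in {ω | t ≤ optimalStoppingTime Q 𝓕 Y ω}, Y (optimalStoppingTime Q 𝓕 Y ω) ω ∂Q := by
  set τ := optimalStoppingTime Q 𝓕 Y
  have hτ_le := measurableSet_optimalStoppingTime_le (Q := Q) hmono hadp
  have hτ_gt (t : T) : MeasurableSet[𝓕 t] {ω | t < τ ω} := by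
    simpa only [Set.compl_ofPred, not_le] using (hτ_le t).compl
  have hτ_eq (t : T) : MeasurableSet {ω | τ ω = t} :=
    hle t _ (measurableSet_eq_of_measurableSet_le hmono hτ_le t)
  have hYτ : Integrable (fun ω => Y (τ ω) ω) Q :=
    integrable_apply_of_measurableSet_eq hτ_eq hint
  induction t using WellFoundedGT.induction with
  | _ t ih =>
  have hstrict : ∫ ω in {ω | t < τ ω}, snellEnvelope Q 𝓕 Y t ω ∂Q
      = ∫ ω in {ω | t < τ ω}, Y (τ ω) ω ∂Q := by
    by_cases ht : IsMax t
    · simp [ht.not_lt]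
    · have hset : {ω | t < τ ω} = {ω | succ t ≤ τ ω} :=
        Set.ext fun ω => (succ_le_iff_of_not_isMax ht).symm
      calc ∫ ω in {ω | t < τ ω}, snellEnvelope Q 𝓕 Y t ω ∂Q
          = ∫ ω in {ω | t < τ ω}, Q[snellEnvelope Q 𝓕 Y (succ t) | 𝓕 t] ω ∂Q :=
            setIntegral_congr_fun (hle t _ (hτ_gt t)) fun ω hω =>
              snellEnvelope_eq_condExp_of_ne (snellEnvelope_ne_of_lt_optimalStoppingTime hω)
        _ = ∫ ω in {ω | t < τ ω}, snellEnvelope Q 𝓕 Y (succ t) ω ∂Q :=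
            setIntegral_condExp (hle t) (integrable_snellEnvelope hint _) (hτ_gt t)
        _ = ∫ ω in {ω | t < τ ω}, Y (τ ω) ω ∂Q := by
            rw [hset]
            exact ih _ (lt_succ_of_not_isMax ht)
  rw [setIntegral_le_eq_add (hle t _ (hτ_gt t)) (integrable_snellEnvelope hint t),
    setIntegral_le_eq_add (hle t _ (hτ_gt t)) hYτ, hstrict]
  congr 1
  refine setIntegral_congr_fun (hτ_eq t) fun ω (hω : τ ω = t) => ?_
  rw [← hω, snellEnvelope_optimalStoppingTime]

theorem integral_snellEnvelope_eq [IsFiniteMeasure Q] (hmono : Monotone 𝓕)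
    (hle : ∀ t, 𝓕 t ≤ m₀) (hadp : ∀ t, Measurable[𝓕 t] (Y t))
    (hint : ∀ t, Integrable (Y t) Q) {t₀ : T} (ht₀ : ∀ t, t₀ ≤ t) :
    ∫ ω, snellEnvelope Q 𝓕 Y t₀ ω ∂Q = ∫ ω, Y (optimalStoppingTime Q 𝓕 Y ω) ω ∂Q := by
  simpa [ht₀] using setIntegral_snellEnvelope_eq hmono hle hadp hint t₀

end OptimalStoppingTime

/-- **The relaxed optimal value is attained by a genuine stopping time** (Proposition 3.1,
attainment assertion).

`T` is a finite nonempty linearly ordered set of exercise dates, `(Ω, 𝓐, Q)` a probability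
space with a filtration `𝓕`, and `(Y t)` an adapted family of integrable rewards.  There is a
`T`-valued stopping time `τ⋄` with `E[Y_{τ⋄}]` equal to the supremum of `E[Σ_t P_t Y_t]` over
all relaxed stopping rules `(P_t)`; in particular the relaxed supremum is attained by the
Dirac rule `δ_{τ⋄}`. -/
theorem relaxed_value_attained_by_stopping_time
    {T Ω : Type*} [Fintype T] [Nonempty T] [LinearOrder T]
    [m0 : MeasurableSpace Ω] (Q : Measure Ω) [IsProbabilityMeasure Q]
    (𝓕 : T → MeasurableSpace Ω) (hmono : Monotone 𝓕) (hle : ∀ t, 𝓕 t ≤ m0)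
    (Y : T → Ω → ℝ) (hadp : ∀ t, Measurable[𝓕 t] (Y t))
    (hint : ∀ t, Integrable (Y t) Q) :
    ∃ τ : Ω → T,
      (∀ t, MeasurableSet[𝓕 t] {ω | τ ω ≤ t}) ∧
      ∫ ω, Y (τ ω) ω ∂Q =
        sSup {r : ℝ | ∃ P : T → Ω → ℝ,
          (∀ t, Measurable[𝓕 t] (P t)) ∧
          (∀ t ω, 0 ≤ P t ω) ∧ (∀ t ω, P t ω ≤ 1) ∧
          (∀ ω, ∑ t, P t ω = 1) ∧
          r = ∫ ω, (∑ t, P t ω * Y t ω) ∂Q} := by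
  let _ : SuccOrder T := .ofLinearWellFoundedLT T
  set τ := optimalStoppingTime Q 𝓕 Y
  have hτ_le := measurableSet_optimalStoppingTime_le (Q := Q) hmono hadp
  obtain ⟨t₀, ht₀⟩ := Finite.exists_min (id : T → T)
  refine ⟨τ, hτ_le, (IsGreatest.csSup_eq ⟨?_, ?_⟩).symm⟩
  · have hδ := isRelaxedStoppingRule_indicator (measurableSet_eq_of_measurableSet_le hmono hτ_le)
    exact ⟨_, hδ.measurable, hδ.nonneg, hδ.le_one, hδ.sum_eq_one,
      integral_congr_ae (ae_of_all _ fun ω => (sum_indicator_one_mul_eq_apply Y ω).symm)⟩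
  · rintro _ ⟨P, hPm, hP0, -, hP1, rfl⟩
    calc ∫ ω, ∑ t, P t ω * Y t ω ∂Q
        ≤ ∫ ω, snellEnvelope Q 𝓕 Y t₀ ω ∂Q :=
          integral_sum_mul_le_of_supermartingale hmono hle ⟨hPm, hP0, hP1⟩ hint
            (integrable_snellEnvelope hint) (fun t => ae_of_all _ (le_snellEnvelope t))
            (fun t ht => ae_of_all _ (condExp_succ_le_snellEnvelope ht)) ht₀
      _ = ∫ ω, Y (τ ω) ω ∂Q := integral_snellEnvelope_eq hmono hle hadp hint ht₀
end

section
/- For all 𝒯-valued stopping times τ and τ', |E[Y_τ] − E[Y_{τ'}]| ≤ C · Q(τ ≠ τ')^{1/2}, where C = 2‖Φ‖_{L²(Q)} with Φ = Σ_{t∈𝒯} |Y_t|. -/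
/-!
Off the event `{τ ≠ τ'}` the two stopped rewards coincide, and on it each is bounded by
`Φ = Σ_t |Y_t|`, so `|E[Y_τ] - E[Y_{τ'}]| ≤ 2 E[Φ; τ ≠ τ']`. Cauchy–Schwarz bounds the
last expectation by `‖Φ‖_{L²} · Q(τ ≠ τ')^{1/2}`.
-/

open MeasureTheory

section

variable {ι Ω : Type*} [MeasurableSpace Ω]

theorem measurableSet_preimage_singleton_of_measurableSet_le [LinearOrder ι] [Countable ι]
    {σ : Ω → ι} (hσ : ∀ i, MeasurableSet {ω | σ ω ≤ i}) (i : ι) :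
    MeasurableSet (σ ⁻¹' {i}) := by
  have hfiber :
      σ ⁻¹' {i} = {ω | σ ω ≤ i} \ ⋃ j, ⋃ (_ : j < i), {ω | σ ω ≤ j} := by
    ext ω
    simp only [Set.mem_preimage, Set.mem_singleton_iff, Set.mem_sdiff, Set.mem_ofPred_eq,
      Set.mem_iUnion, not_exists, not_le]
    exact ⟨fun h => ⟨h.le, fun j hj => h ▸ hj⟩,
      fun ⟨hle, hlt⟩ => hle.antisymm (not_lt.1 fun h => (hlt _ h).false)⟩
  rw [hfiber]
  exact (hσ i).diff (.iUnion fun j => .iUnion fun _ => hσ j)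

theorem measurable_apply_of_measurableSet_preimage_singleton [Countable ι] {β : Type*}
    [MeasurableSpace β] {Y : ι → Ω → β} {σ : Ω → ι} (hY : ∀ i, Measurable (Y i))
    (hσ : ∀ i, MeasurableSet (σ ⁻¹' {i})) :
    Measurable fun ω => Y (σ ω) ω := by
  let : MeasurableSpace ι := ⊤
  have hYσ : Measurable fun p : Ω × ι => Y p.2 p.1 := measurable_from_prod_countable_left hY
  exact hYσ.comp (measurable_id.prodMk (measurable_to_countable' hσ))

variable {μ : Measure Ω}

theorem setIntegral_le_sqrt_integral_sq_mul_sqrt_measureReal [IsFiniteMeasure μ] {f : Ω → ℝ}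
    (hf₀ : 0 ≤ᵐ[μ] f) (hf : MemLp f 2 μ) (s : Set Ω) :
    ∫ ω in s, f ω ∂μ ≤ √(∫ ω, f ω ^ 2 ∂μ) * √(μ.real s) := by
  have hf2 : MemLp f (ENNReal.ofReal 2) (μ.restrict s) := by simpa using hf.restrict s
  have hone : MemLp (fun _ => (1 : ℝ)) (ENNReal.ofReal 2) (μ.restrict s) := memLp_const 1
  have hHolder := integral_mul_le_Lp_mul_Lq_of_nonneg Real.HolderConjugate.two_two
    (ae_restrict_of_ae hf₀) (ae_of_all _ fun _ => zero_le_one) hf2 hone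
  have hsq : ∫ ω in s, f ω ^ 2 ∂μ ≤ ∫ ω, f ω ^ 2 ∂μ :=
    setIntegral_le_integral hf.integrable_sq (ae_of_all _ fun _ => sq_nonneg _)
  simp only [mul_one, Real.one_rpow, integral_const, smul_eq_mul,
    measureReal_restrict_apply_univ] at hHolder
  calc ∫ ω in s, f ω ∂μ ≤ √(∫ ω in s, f ω ^ 2 ∂μ) * √(μ.real s) := by
        simpa [Real.sqrt_eq_rpow, Real.rpow_two] using hHolder
    _ ≤ √(∫ ω, f ω ^ 2 ∂μ) * √(μ.real s) := by gcongr

theorem abs_integral_sub_le_two_mul_setIntegral {f g Φ : Ω → ℝ} {s : Set Ω}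
    (hf : Integrable f μ) (hg : Integrable g μ) (hΦ : Integrable Φ μ)
    (hfΦ : ∀ ω, |f ω| ≤ Φ ω) (hgΦ : ∀ ω, |g ω| ≤ Φ ω) (hfg : ∀ ω ∉ s, f ω = g ω) :
    |∫ ω, f ω ∂μ - ∫ ω, g ω ∂μ| ≤ 2 * ∫ ω in s, Φ ω ∂μ := by
  have hsub : ∫ ω in s, (f ω - g ω) ∂μ = ∫ ω, f ω ∂μ - ∫ ω, g ω ∂μ := by
    rw [setIntegral_eq_integral_of_forall_compl_eq_zero
      fun ω hω => sub_eq_zero.2 (hfg ω hω), integral_sub hf hg]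
  calc |∫ ω, f ω ∂μ - ∫ ω, g ω ∂μ| = |∫ ω in s, (f ω - g ω) ∂μ| := by rw [hsub]
    _ ≤ ∫ ω in s, |f ω - g ω| ∂μ := abs_integral_le_integral_abs
    _ ≤ ∫ ω in s, 2 * Φ ω ∂μ := by
        refine setIntegral_mono (hf.sub hg).abs.integrableOn (hΦ.const_mul 2).integrableOn
          fun ω => ?_
        linarith [abs_sub (f ω) (g ω), hfΦ ω, hgΦ ω]
    _ = 2 * ∫ ω in s, Φ ω ∂μ := integral_const_mul 2 _

end

theorem stopping_value_diff_le_general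
    {T Ω : Type*} [Fintype T] [LinearOrder T]
    [m0 : MeasurableSpace Ω] (Q : Measure Ω) [IsProbabilityMeasure Q]
    (𝓕 : T → MeasurableSpace Ω) (hle : ∀ t, 𝓕 t ≤ m0)
    (Y : T → Ω → ℝ) (hadp : ∀ t, Measurable[𝓕 t] (Y t))
    (hΦ : Integrable (fun ω => (∑ t, |Y t ω|) ^ 2) Q)
    (τ τ' : Ω → T)
    (hτ : ∀ t, MeasurableSet[𝓕 t] {ω | τ ω ≤ t})
    (hτ' : ∀ t, MeasurableSet[𝓕 t] {ω | τ' ω ≤ t}) :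
    |(∫ ω, Y (τ ω) ω ∂Q) - ∫ ω, Y (τ' ω) ω ∂Q| ≤
      (2 * Real.sqrt (∫ ω, (∑ t, |Y t ω|) ^ 2 ∂Q)) *
        Real.sqrt ((Q {ω | τ ω ≠ τ' ω}).toReal) := by
  set Φ : Ω → ℝ := fun ω => ∑ t, |Y t ω|
  have hY : ∀ t, Measurable (Y t) := fun t => (hadp t).mono (hle t) le_rfl
  have hΦ₂ : MemLp Φ 2 Q := (memLp_two_iff_integrable_sq
    (Finset.measurable_sum _ fun t _ => (hY t).abs).aestronglyMeasurable).2 hΦ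
  have hΦ_dom : ∀ (σ : Ω → T) ω, |Y (σ ω) ω| ≤ Φ ω := fun σ ω =>
    Finset.single_le_sum (f := fun t => |Y t ω|) (fun t _ => abs_nonneg _) (Finset.mem_univ _)
  have hstopped : ∀ σ : Ω → T, (∀ t, MeasurableSet[𝓕 t] {ω | σ ω ≤ t}) →
      Integrable (fun ω => Y (σ ω) ω) Q := fun σ hσ =>
    have hσ_fiber := measurableSet_preimage_singleton_of_measurableSet_le fun t => hle t _ (hσ t)
    (hΦ₂.integrable one_le_two).mono'
      (measurable_apply_of_measurableSet_preimage_singleton hY hσ_fiber).aestronglyMeasurable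
      (ae_of_all _ (hΦ_dom σ))
  calc |(∫ ω, Y (τ ω) ω ∂Q) - ∫ ω, Y (τ' ω) ω ∂Q|
      ≤ 2 * ∫ ω in {ω | τ ω ≠ τ' ω}, Φ ω ∂Q :=
        abs_integral_sub_le_two_mul_setIntegral (hstopped τ hτ) (hstopped τ' hτ')
          (hΦ₂.integrable one_le_two) (hΦ_dom τ) (hΦ_dom τ')
          fun ω hω => by rw [not_not.1 hω]
    _ ≤ 2 * (Real.sqrt (∫ ω, Φ ω ^ 2 ∂Q) * Real.sqrt (Q.real {ω | τ ω ≠ τ' ω})) := by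
        gcongr
        exact setIntegral_le_sqrt_integral_sq_mul_sqrt_measureReal
          (ae_of_all _ fun ω => Finset.sum_nonneg fun t _ => abs_nonneg _) hΦ₂ _
    _ = _ := by rw [measureReal_def, mul_assoc]

/-- **Continuity of the value of stopping times** (Lemma 3.2, second assertion).

`T` is a finite nonempty linearly ordered set, `(Ω, 𝓐, Q)` a probability space with a
filtration `𝓕`, and `(Y t)` an adapted family of rewards with `Φ = Σ_t |Y_t|`
square-integrable.  For any two `T`-valued stopping times `τ, τ'`,
`|E[Y_τ] − E[Y_{τ'}]| ≤ C · Q(τ ≠ τ')^{1/2}` with `C = 2‖Φ‖_{L²(Q)}`. -/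
theorem stopping_value_diff_le
    {T Ω : Type*} [Fintype T] [Nonempty T] [LinearOrder T]
    [m0 : MeasurableSpace Ω] (Q : Measure Ω) [IsProbabilityMeasure Q]
    (𝓕 : T → MeasurableSpace Ω) (hmono : Monotone 𝓕) (hle : ∀ t, 𝓕 t ≤ m0)
    (Y : T → Ω → ℝ) (hadp : ∀ t, Measurable[𝓕 t] (Y t))
    (hΦ : Integrable (fun ω => (∑ t, |Y t ω|) ^ 2) Q)
    (τ τ' : Ω → T)
    (hτ : ∀ t, MeasurableSet[𝓕 t] {ω | τ ω ≤ t})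
    (hτ' : ∀ t, MeasurableSet[𝓕 t] {ω | τ' ω ≤ t}) :
    |(∫ ω, Y (τ ω) ω ∂Q) - ∫ ω, Y (τ' ω) ω ∂Q| ≤
      (2 * Real.sqrt (∫ ω, (∑ t, |Y t ω|) ^ 2 ∂Q)) *
        Real.sqrt ((Q {ω | τ ω ≠ τ' ω}).toReal) :=
  stopping_value_diff_le_general (m0 := m0) Q 𝓕 hle Y hadp hΦ τ τ' hτ hτ'
end

section
/- Assume the conditional absolute continuity assumption with moduli (ρ_t)_{t∈𝒯} and set ρ(ι) = Σ_{t∈𝒯} ρ_t(ι). Let ι > 0, δ ∈ [0,1], and let K ⊆ E be a Borel set such that Q(Ξ(X_t) ∈ K for all t ∈ 𝒯) ≥ 1 − δ. Let f, f' be stopping boundaries such that for all (t,ξ) ∈ 𝒯 × K one has f(t,ξ) ≤ f'(t,ξ) + ι and f'(t,ξ) ≤ f(t,ξ) + ι (inequalities in [0,∞]). Then Q(τ_f ≠ τ_{f'}) ≤ ρ(ι) + δ, where τ_f and τ_{f'} are the hitting times of f and f' (with cemetery value ∞ if the boundary is never hit, and the event {τ_f ≠ τ_{f'}} compares values in 𝒯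 ∪ {∞}). -/
open MeasureTheory
open scoped ENNReal NNReal Classical

/-- First hitting time of the family of sets `S` along the path `x`, valued in `T ∪ {∞}`:
the least `t ∈ T` with `x t ∈ S t`, and `⊤` (= ∞) if there is no such `t`. -/
noncomputable def firstHit {T X : Type*} [Fintype T] [LinearOrder T]
    (S : T → Set X) (x : T → X) : WithTop T :=
  (Finset.univ.filter fun t => x t ∈ S t).min

lemma firstHit_ne_exists {T X : Type*} [Fintype T] [LinearOrder T]
    {S S' : T → Set X} {x : T → X}
    (h : firstHit S x ≠ firstHit S' x) :
    ∃ t, ¬ (x t ∈ S t ↔ x t ∈ S' t) := by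
  by_contra hc
  push_neg at hc
  apply h
  unfold firstHit
  congr 1
  apply Finset.filter_congr
  intro t _
  have := hc t
  constructor <;> intro h' <;> simp_all

/-- **Key probability bound on hitting times of close boundaries** (Step 2 of the proof of
Theorem 4.2).

`T` is a finite nonempty linearly ordered set of exercise dates, `(Ω, 𝓐, Q)` a probability
space, `X`, `E` topological spaces with their Borel σ-algebras, `α : X → [0,∞)`,
`Ξ : X → E` Borel measurable, and `(X_t)` `X`-valued random variables.  A stopping boundary
`f : T × E → [0,∞]` has `f(t,·)` lower semicontinuous, stopping regions
`𝔖_t(f) = {x : α(x) ≥ f(t,Ξ(x))}` and hitting time `τ_f = first t with X_t ∈ 𝔖_t(f)`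
(cemetery `∞`).  Under the conditional absolute continuity assumption with moduli
`(ρ_t)`, if `Q(Ξ(X_t) ∈ K ∀t) ≥ 1 − δ` for a Borel set `K` and `f, f'` are uniformly
`ι`-close on `T × K` (inequalities in `[0,∞]`), then `Q(τ_f ≠ τ_{f'}) ≤ Σ_t ρ_t(ι) + δ`. -/
theorem prob_hitting_times_differ_le
    {T Ω X E : Type*} [Fintype T] [Nonempty T] [LinearOrder T]
    [MeasurableSpace Ω]
    [TopologicalSpace X] [MeasurableSpace X] [BorelSpace X]
    [TopologicalSpace E] [MeasurableSpace E] [BorelSpace E]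
    (Q : Measure Ω) [IsProbabilityMeasure Q]
    (α : X → ℝ≥0) (hα : Measurable α) (Ξ : X → E) (hΞ : Measurable Ξ)
    (Xp : T → Ω → X) (hX : ∀ t, Measurable (Xp t))
    (ρ : T → ℝ≥0∞ → ℝ) (hρ : ∀ t ι, ρ t ι ∈ Set.Icc (0 : ℝ) 1)
    -- conditional absolute continuity assumption
    (hAC : ∀ t (g : E → ℝ≥0∞), Measurable g → ∀ ι : ℝ≥0∞, 0 < ι →
      (Q {ω | g (Ξ (Xp t ω)) ≤ (α (Xp t ω) : ℝ≥0∞) ∧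
              (α (Xp t ω) : ℝ≥0∞) < g (Ξ (Xp t ω)) + ι}).toReal ≤ ρ t ι)
    (ι : ℝ≥0∞) (hι : 0 < ι) (δ : ℝ) (hδ0 : 0 ≤ δ) (hδ1 : δ ≤ 1)
    (K : Set E) (hK : MeasurableSet K)
    (hKQ : 1 - δ ≤ (Q {ω | ∀ t, Ξ (Xp t ω) ∈ K}).toReal)
    (f f' : T → E → ℝ≥0∞)
    (hf : ∀ t, LowerSemicontinuous (f t)) (hf' : ∀ t, LowerSemicontinuous (f' t))
    (hclose : ∀ t, ∀ ξ ∈ K, f t ξ ≤ f' t ξ + ι ∧ f' t ξ ≤ f t ξ + ι) :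
    (Q {ω | firstHit (fun t => {x | f t (Ξ x) ≤ (α x : ℝ≥0∞)}) (fun t => Xp t ω) ≠
            firstHit (fun t => {x | f' t (Ξ x) ≤ (α x : ℝ≥0∞)}) (fun t => Xp t ω)}).toReal ≤
      (∑ t, ρ t ι) + δ := by
  classical
  set g : T → E → ℝ≥0∞ := fun t ξ => min (f t ξ) (f' t ξ) with hg
  have hgmeas : ∀ t, Measurable (g t) := fun t =>
    ((hf t).measurable).min ((hf' t).measurable)
  set A : T → Set Ω := fun t => {ω | g t (Ξ (Xp t ω)) ≤ (α (Xp t ω) : ℝ≥0∞) ∧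
        (α (Xp t ω) : ℝ≥0∞) < g t (Ξ (Xp t ω)) + ι} with hA
  set C : Set Ω := {ω | ∀ t, Ξ (Xp t ω) ∈ K} with hC
  have hCmeas : MeasurableSet C := by
    have : C = ⋂ t, (fun ω => Ξ (Xp t ω)) ⁻¹' K := by
      ext ω; simp [hC, Set.mem_iInter]
    rw [this]
    exact MeasurableSet.iInter fun t => (hΞ.comp (hX t)) hK
  -- inclusion
  have hsub : {ω | firstHit (fun t => {x | f t (Ξ x) ≤ (α x : ℝ≥0∞)}) (fun t => Xp t ω) ≠
            firstHit (fun t => {x | f' t (Ξ x) ≤ (α x : ℝ≥0∞)}) (fun t => Xp t ω)}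
      ⊆ Cᶜ ∪ ⋃ t, A t := by
    intro ω hω
    by_cases hωC : ω ∈ C
    · right
      obtain ⟨t, ht⟩ := firstHit_ne_exists hω
      refine Set.mem_iUnion.2 ⟨t, ?_⟩
      have hξK : Ξ (Xp t ω) ∈ K := hωC t
      obtain ⟨h1, h2⟩ := hclose t _ hξK
      simp only [Set.mem_setOf_eq] at ht
      by_cases hfle : f t (Ξ (Xp t ω)) ≤ (α (Xp t ω) : ℝ≥0∞)
      · have hf'gt : ¬ f' t (Ξ (Xp t ω)) ≤ (α (Xp t ω) : ℝ≥0∞) :=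
          fun h => ht ⟨fun _ => h, fun _ => hfle⟩
        push_neg at hf'gt
        have hgeq : g t (Ξ (Xp t ω)) = f t (Ξ (Xp t ω)) :=
          min_eq_left (le_of_lt (lt_of_le_of_lt hfle hf'gt))
        refine ⟨by rw [hgeq]; exact hfle, ?_⟩
        rw [hgeq]
        exact lt_of_lt_of_le hf'gt (by simpa using h2)
      · have hf'le : f' t (Ξ (Xp t ω)) ≤ (α (Xp t ω) : ℝ≥0∞) := by
          by_contra h
          exact ht (iff_of_false hfle h)
        push_neg at hfle
        have hfgt := hfle
        have hgeq : g t (Ξ (Xp t ω)) = f' t (Ξ (Xp t ω)) :=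
          min_eq_right (le_of_lt (lt_of_le_of_lt hf'le hfgt))
        refine ⟨by rw [hgeq]; exact hf'le, ?_⟩
        rw [hgeq]
        exact lt_of_lt_of_le hfgt (by simpa using h1)
    · exact Or.inl hωC
  -- measure bound in ℝ≥0∞
  have hmeas_le : Q {ω | firstHit (fun t => {x | f t (Ξ x) ≤ (α x : ℝ≥0∞)}) (fun t => Xp t ω) ≠
            firstHit (fun t => {x | f' t (Ξ x) ≤ (α x : ℝ≥0∞)}) (fun t => Xp t ω)}
      ≤ Q Cᶜ + ∑ t, Q (A t) := by
    calc _ ≤ Q (Cᶜ ∪ ⋃ t, A t) := measure_mono hsub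
    _ ≤ Q Cᶜ + Q (⋃ t, A t) := measure_union_le _ _
    _ ≤ Q Cᶜ + ∑ t, Q (A t) := by
        gcongr
        exact measure_iUnion_fintype_le _ _
  have hfin : Q Cᶜ + ∑ t, Q (A t) ≠ ⊤ := by
    apply ENNReal.add_ne_top.2
    constructor
    · exact measure_ne_top _ _
    · exact ENNReal.sum_ne_top.2 fun t _ => measure_ne_top _ _
  have htR : (Q {ω | firstHit (fun t => {x | f t (Ξ x) ≤ (α x : ℝ≥0∞)}) (fun t => Xp t ω) ≠
            firstHit (fun t => {x | f' t (Ξ x) ≤ (α x : ℝ≥0∞)}) (fun t => Xp t ω)}).toReal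
      ≤ (Q Cᶜ).toReal + ∑ t, (Q (A t)).toReal := by
    have := ENNReal.toReal_mono hfin hmeas_le
    rwa [ENNReal.toReal_add (measure_ne_top _ _)
      (ENNReal.sum_ne_top.2 fun t _ => measure_ne_top _ _),
      ENNReal.toReal_sum (fun t _ => measure_ne_top _ _)] at this
  have hCcle : (Q Cᶜ).toReal ≤ δ := by
    rw [prob_compl_eq_one_sub hCmeas, ENNReal.toReal_sub_of_le prob_le_one ENNReal.one_ne_top]
    simp only [ENNReal.toReal_one]
    linarith [hKQ]
  have hAle : ∀ t, (Q (A t)).toReal ≤ ρ t ι := fun t =>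
    hAC t (g t) (hgmeas t) ι hι
  calc _ ≤ (Q Cᶜ).toReal + ∑ t, (Q (A t)).toReal := htR
  _ ≤ δ + ∑ t, ρ t ι := by
      gcongr
      exact hAle _
  _ = (∑ t, ρ t ι) + δ := by ring
end

section
/- Assume the conditional absolute continuity assumption with moduli (ρ_t)_{t∈𝒯} and set ρ(ε) = Σ_{t∈𝒯} ρ_t(ε). For a stopping boundary f and ε > 0, let τ_f be the hitting time of the region 𝔖_t(f) = {x : (α(x):[0,∞]) ≥ f(t,Ξ(x))} and let τ_{f⊖ε} be the hitting time of the enlarged region 𝔖_t(f⊖ε) = {x : f(t,Ξ(x)) ≤ α(x) + ε} (both with cemetery value ∞ if never hit). Then Q(τ_{f⊖ε} ≠ τ_f) ≤ ρ(ε). -/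
open MeasureTheory
open scoped ENNReal NNReal Classical

/-- **Unlocalized bound for the hitting time of the enlarged region** (end of the proof of
Corollary 4.3).

Under the conditional absolute continuity assumption with moduli `(ρ_t)`, for every stopping
boundary `f` (lower semicontinuous in space, `[0,∞]`-valued) and every `ε > 0`, the hitting
time `τ_f` of `𝔖_t(f) = {x : α(x) ≥ f(t,Ξ(x))}` and the hitting time `τ_{f⊖ε}` of the
enlarged region `𝔖_t(f⊖ε) = {x : f(t,Ξ(x)) ≤ α(x) + ε}` (both with cemetery value `∞`)
satisfy `Q(τ_{f⊖ε} ≠ τ_f) ≤ ρ(ε) = Σ_t ρ_t(ε)`. -/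
theorem prob_hitting_time_enlarged_differ_le
    {T Ω X E : Type*} [Fintype T] [Nonempty T] [LinearOrder T]
    [MeasurableSpace Ω]
    [TopologicalSpace X] [MeasurableSpace X] [BorelSpace X]
    [TopologicalSpace E] [MeasurableSpace E] [BorelSpace E]
    (Q : Measure Ω) [IsProbabilityMeasure Q]
    (α : X → ℝ≥0) (hα : Measurable α) (Ξ : X → E) (hΞ : Measurable Ξ)
    (Xp : T → Ω → X) (hX : ∀ t, Measurable (Xp t))
    (ρ : T → ℝ≥0∞ → ℝ) (hρ : ∀ t ι, ρ t ι ∈ Set.Icc (0 : ℝ) 1)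
    -- conditional absolute continuity assumption
    (hAC : ∀ t (g : E → ℝ≥0∞), Measurable g → ∀ ι : ℝ≥0∞, 0 < ι →
      (Q {ω | g (Ξ (Xp t ω)) ≤ (α (Xp t ω) : ℝ≥0∞) ∧
              (α (Xp t ω) : ℝ≥0∞) < g (Ξ (Xp t ω)) + ι}).toReal ≤ ρ t ι)
    (f : T → E → ℝ≥0∞) (hf : ∀ t, LowerSemicontinuous (f t))
    (ε : ℝ≥0∞) (hε : 0 < ε) :
    (Q {ω | firstHit (fun t => {x | f t (Ξ x) ≤ (α x : ℝ≥0∞) + ε}) (fun t => Xp t ω) ≠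
            firstHit (fun t => {x | f t (Ξ x) ≤ (α x : ℝ≥0∞)}) (fun t => Xp t ω)}).toReal ≤
      ∑ t, ρ t ε := by
  classical
  set A : T → Set Ω := fun t => {ω | f t (Ξ (Xp t ω)) - ε ≤ (α (Xp t ω) : ℝ≥0∞) ∧
      (α (Xp t ω) : ℝ≥0∞) < (f t (Ξ (Xp t ω)) - ε) + ε} with hAdef
  have hsub : {ω | firstHit (fun t => {x | f t (Ξ x) ≤ (α x : ℝ≥0∞) + ε}) (fun t => Xp t ω) ≠
            firstHit (fun t => {x | f t (Ξ x) ≤ (α x : ℝ≥0∞)}) (fun t => Xp t ω)} ⊆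
      ⋃ t, A t := by
    intro ω hω
    by_contra hcon
    simp only [Set.mem_iUnion, not_exists] at hcon
    apply hω
    unfold firstHit
    congr 1
    apply Finset.ext
    intro t
    simp only [Finset.mem_filter, Finset.mem_univ, true_and, Set.mem_setOf_eq]
    constructor
    · intro h1
      by_contra h2
      push_neg at h2
      exact hcon t ⟨tsub_le_iff_right.mpr h1, by
        rcases le_or_gt ε (f t (Ξ (Xp t ω))) with h | h
        · rw [tsub_add_cancel_of_le h]; exact h2
        · rw [tsub_eq_zero_of_le h.le, zero_add]; exact lt_of_lt_of_le h2 h.le⟩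
    · intro h1
      exact le_trans h1 le_self_add
  have hAne : ∀ t, Q (A t) ≠ ⊤ := fun t => (measure_lt_top Q (A t)).ne
  have h1 : Q {ω | firstHit (fun t => {x | f t (Ξ x) ≤ (α x : ℝ≥0∞) + ε}) (fun t => Xp t ω) ≠
            firstHit (fun t => {x | f t (Ξ x) ≤ (α x : ℝ≥0∞)}) (fun t => Xp t ω)} ≤
      ∑ t, Q (A t) := by
    refine le_trans (measure_mono hsub) ?_
    refine le_trans (measure_iUnion_le A) ?_
    rw [tsum_fintype]
  have hsum_ne : (∑ t, Q (A t)) ≠ ⊤ := by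
    exact (ENNReal.sum_lt_top.mpr (fun t _ => measure_lt_top Q (A t))).ne
  calc (Q _).toReal ≤ (∑ t, Q (A t)).toReal := ENNReal.toReal_mono hsum_ne h1
    _ = ∑ t, (Q (A t)).toReal := ENNReal.toReal_sum (fun t _ => hAne t)
    _ ≤ ∑ t, ρ t ε := by
        apply Finset.sum_le_sum
        intro t _
        exact hAC t (fun e => f t e - ε)
          (((hf t).measurable).sub measurable_const) ε hε
end

section
/- Let 𝒯 be a finite nonempty linearly ordered set, f a stopping boundary, ε > 0, and x : 𝒯 → X a path. Let τ ∈ 𝒯 ∪ {∞} be the first t with f(t,Ξ(x(t))) ≤ α(x(t)) and τ^ε ∈ 𝒯 ∪ {∞} the first t with f(t,Ξ(x(t))) ≤ α(x(t)) + ε (each equal to ∞ if no such t exists). Define weights q_t recursively in increasing t by q_t = χ^ε( (f(t,Ξ(x(t))) − α(x(t)))⁺ ) · (1 − Σ_{s∈𝒯, s<t} q_s), where χ^ε(u) = min(1, max(0, 1 − u/ε)) for u ∈ [0,∞] (so χ^ε(∞) = 0). If τ^ε = τ, then q_t = 1 if t = τ and q_t = 0 for every t ∈ 𝒯 with t ≠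 τ (in particular all q_t = 0 when τ = ∞). -/
open scoped ENNReal NNReal Classical

/-- Relaxed phase indicator `χ^ε(u) = min(1, max(0, 1 − u/ε))` for `u ∈ [0,∞]`,
with `χ^ε(∞) = 0`. -/
noncomputable def relaxChi (ε : ℝ) (u : ℝ≥0∞) : ℝ :=
  if u = ⊤ then 0 else min 1 (max 0 (1 - u.toReal / ε))

/-- Pathwise stopping weights defined recursively in increasing `t` by
`q t = p t * (1 − Σ_{s < t} q s)`. -/
noncomputable def stopWeight {T : Type*} [Fintype T] [LinearOrder T] (p : T → ℝ) (t : T) : ℝ :=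
  p t * (1 - ∑ s ∈ (Finset.univ.filter fun s : T => s < t).attach, stopWeight p s.1)
termination_by (Finset.univ.filter fun s : T => s < t).card
decreasing_by
  have hst : (s : T) < t := (Finset.mem_filter.mp s.2).2
  apply Finset.card_lt_card
  rw [Finset.ssubset_def]
  refine ⟨fun u hu => ?_, fun hsub => ?_⟩
  · simp only [Finset.mem_filter, Finset.mem_univ, true_and] at hu ⊢
    exact hu.trans hst
  · have h1 : (s : T) ∈ Finset.univ.filter (fun u : T => u < t) := by simp [hst]
    have h2 := hsub h1
    simp only [Finset.mem_filter, Finset.mem_univ, true_and] at h2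
    exact lt_irrefl _ h2

lemma relaxChi_zero {ε : ℝ} (hε : 0 < ε) : relaxChi ε 0 = 1 := by
  simp [relaxChi]

lemma relaxChi_eq_zero {ε : ℝ} (hε : 0 < ε) {u : ℝ≥0∞} (h : ENNReal.ofReal ε ≤ u) :
    relaxChi ε u = 0 := by
  unfold relaxChi
  by_cases hu : u = ⊤
  · simp [hu]
  · simp only [hu, if_false]
    have hεu : ε ≤ u.toReal := by
      have := ENNReal.toReal_mono hu h
      rwa [ENNReal.toReal_ofReal hε.le] at this
    have h1 : (1 : ℝ) ≤ u.toReal / ε := (one_le_div hε).mpr hεu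
    have : 1 - u.toReal / ε ≤ 0 := by linarith
    rw [max_eq_left this]; simp

/-- **The relaxed rule is the Dirac mass at the hitting time away from the fuzzy region**
(the inclusion `{τ_{f−ε} = τ_f} ⊆ {μ_f^ε = δ_{τ_f}}` in the proof of Corollary 4.3).

`T` is a finite nonempty linearly ordered set, `f : T × E → [0,∞]` a stopping boundary,
`ε > 0`, and `x : T → X` a path.  Let `τ` be the first `t` with `f(t,Ξ(x t)) ≤ α(x t)` and
`τ^ε` the first `t` with `f(t,Ξ(x t)) ≤ α(x t) + ε` (value `∞` if there is no such `t`), and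
let `q t = χ^ε((f(t,Ξ(x t)) − α(x t))⁺) · (1 − Σ_{s<t} q s)` be the recursively defined
stopping weights.  If `τ^ε = τ`, then `q` is the Dirac vector at `τ`: `q t = 1` if `t = τ`
and `q t = 0` otherwise (all `q t = 0` when `τ = ∞`). -/
theorem relaxed_rule_eq_dirac_of_no_fuzzy_entry
    {T X E : Type*} [Fintype T] [Nonempty T] [LinearOrder T]
    (α : X → ℝ≥0) (Ξ : X → E) (f : T → E → ℝ≥0∞) (ε : ℝ) (hε : 0 < ε)
    (x : T → X)
    (τ τε : WithTop T)
    (hτ : τ = firstHit (fun t => {y | f t (Ξ y) ≤ (α y : ℝ≥0∞)}) x)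
    (hτε : τε = firstHit
      (fun t => {y | f t (Ξ y) ≤ (α y : ℝ≥0∞) + ENNReal.ofReal ε}) x)
    (q : T → ℝ)
    (hq : q = stopWeight fun t => relaxChi ε (f t (Ξ (x t)) - (α (x t) : ℝ≥0∞)))
    (heq : τε = τ) :
    ∀ t : T, q t = if (t : WithTop T) = τ then 1 else 0 := by

  simp only [firstHit] at hτ hτε
  have key : ∀ t : T, q t = if (t : WithTop T) = τ then 1 else 0 := by
    intro t
    induction t using WellFoundedLT.induction with
    | _ t IH =>
    set p : T → ℝ := fun t => relaxChi ε (f t (Ξ (x t)) - (α (x t) : ℝ≥0∞)) with hp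
    have hqt : q t = p t * (1 - ∑ s ∈ (Finset.univ.filter fun s : T => s < t), q s) := by
      rw [hq, stopWeight, Finset.sum_attach _ (fun s => stopWeight p s)]
    rcases lt_trichotomy (t : WithTop T) τ with hlt | heqt | hgt
    · -- before τ : not in the ε-set, so p t = 0
      have htne : ¬ (f t (Ξ (x t)) ≤ (α (x t) : ℝ≥0∞) + ENNReal.ofReal ε) := by
        intro hmem
        have : τε ≤ (t : WithTop T) := by
          rw [hτε]
          exact Finset.min_le (by simpa using hmem)
        rw [heq] at this
        exact absurd (this.trans_lt hlt) (lt_irrefl _)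
      have hsub : ENNReal.ofReal ε ≤ f t (Ξ (x t)) - (α (x t) : ℝ≥0∞) := by
        have hlt' : (α (x t) : ℝ≥0∞) + ENNReal.ofReal ε ≤ f t (Ξ (x t)) := (not_le.mp htne).le
        exact ENNReal.le_sub_of_add_le_left ENNReal.coe_ne_top hlt'
      have hp0 : p t = 0 := relaxChi_eq_zero hε hsub
      rw [hqt, hp0, zero_mul, if_neg hlt.ne]
    · -- t = τ
      have hmem := Finset.mem_of_min (hτ ▸ heqt).symm
      have hle : f t (Ξ (x t)) ≤ (α (x t) : ℝ≥0∞) := by simpa using hmem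
      have hp1 : p t = 1 := by
        have : f t (Ξ (x t)) - (α (x t) : ℝ≥0∞) = 0 := tsub_eq_zero_of_le hle
        rw [hp]; simp only [this]; exact relaxChi_zero hε
      have hsum : ∑ s ∈ (Finset.univ.filter fun s : T => s < t), q s = 0 := by
        apply Finset.sum_eq_zero
        intro s hs
        have hst : s < t := (Finset.mem_filter.mp hs).2
        have : (s : WithTop T) < τ := heqt ▸ WithTop.coe_lt_coe.mpr hst
        rw [IH s hst, if_neg this.ne]
      rw [hqt, hp1, hsum, if_pos heqt]; ring
    · -- t > τ
      obtain ⟨t0, ht0⟩ : ∃ t0 : T, τ = (t0 : WithTop T) := by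
        cases τ with
        | top => exact absurd hgt (by simp)
        | coe t0 => exact ⟨t0, rfl⟩
      have ht0t : t0 < t := WithTop.coe_lt_coe.mp (ht0 ▸ hgt)
      have hsum : ∑ s ∈ (Finset.univ.filter fun s : T => s < t), q s = 1 := by
        have : ∀ s ∈ (Finset.univ.filter fun s : T => s < t),
            q s = if s = t0 then 1 else 0 := by
          intro s hs
          have hst : s < t := (Finset.mem_filter.mp hs).2
          rw [IH s hst, ht0]
          by_cases h : s = t0 <;> simp [h, WithTop.coe_eq_coe]
        rw [Finset.sum_congr rfl this, Finset.sum_ite_eq' _ t0,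
          if_pos (by simp [ht0t])]
      rw [hqt, hsum, if_neg (ne_of_gt hgt)]; ring
  exact key
end

section
/- (Inf convolutions approximate l.s.c. functions after small reparametrization.) Let E be a metric space, K ⊆ E a nonempty compact set, 𝒯 a finite nonempty set, M > 0, and f : 𝒯 × E → ℝ such that f(t,·) is lower semicontinuous for every t ∈ 𝒯 and 0 ≤ f(t,ξ) ≤ M for all (t,ξ) ∈ 𝒯 × K. For δ > 0 define f_δ^K(t,ξ) = inf_{ξ'∈K} [f(t,ξ') + dist(ξ',ξ)²/δ]. Then for every ι > 0 and every r > 0 there exist δ > 0 and a Borel measurable map ψ : K → K with sup_{ξ∈K} dist(ψ(ξ), ξ) ≤ r such that for all t ∈ 𝒯 and all ξ ∈ K, |f(t,ψ(ξ)) − f_δ^K(t,ψ(ξ))| ≤ ι. -/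
open Metric

open Classical in
private noncomputable def pickAux {E : Type*} [MetricSpace E] (r : ℝ) (d : E) :
    List E → E → E
  | [], _ => d
  | x :: xs, ξ => if dist ξ x < r then x else pickAux r d xs ξ

private lemma pickAux_measurable {E : Type*} [MetricSpace E] [MeasurableSpace E]
    [OpensMeasurableSpace E] (r : ℝ) (d : E) (l : List E) :
    Measurable (pickAux r d l) := by
  induction l with
  | nil => exact measurable_const
  | cons x xs ih =>
    have : pickAux r d (x :: xs) = fun ξ => if dist ξ x < r then x else pickAux r d xs ξ := rfl
    rw [this]
    exact Measurable.ite measurableSet_ball measurable_const ih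

private lemma pickAux_mem {E : Type*} [MetricSpace E] (r : ℝ) (d : E) (l : List E) (ξ : E) :
    pickAux r d l ξ ∈ d :: l := by
  induction l with
  | nil => simp [pickAux]
  | cons x xs ih =>
    by_cases h : dist ξ x < r
    · simp [pickAux, h]
    · rcases List.mem_cons.1 ih with h' | h'
      · simp [pickAux, h, h']
      · simp [pickAux, h, h']

private lemma pickAux_dist {E : Type*} [MetricSpace E] (r : ℝ) (d : E) (l : List E) (ξ : E)
    (h : ∃ x ∈ l, dist ξ x < r) : dist (pickAux r d l ξ) ξ < r := by
  induction l with
  | nil => simp at h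
  | cons x xs ih =>
    by_cases hx : dist ξ x < r
    · simp [pickAux, hx, dist_comm]
    · obtain ⟨y, hy, hyd⟩ := h
      rcases List.mem_cons.1 hy with rfl | hy
      · exact absurd hyd hx
      · simpa [pickAux, hx] using ih ⟨y, hy, hyd⟩

/-- **Inf convolutions approximate l.s.c. functions after a small reparametrization**
(Lemma 5.4).

Let `E` be a metric space, `K ⊆ E` nonempty compact, `T` finite nonempty, `M > 0`, and
`f : T × E → ℝ` with `f(t,·)` lower semicontinuous and `0 ≤ f ≤ M` on `T × K`.  Writing
`f_δ^K(t,ξ) = inf_{ξ'∈K} [f(t,ξ') + dist(ξ',ξ)²/δ]` for the restricted inf convolution,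
for every `ι > 0` and every `r > 0` there exist `δ > 0` and a Borel measurable map
`ψ : K → K` moving points by at most `r` such that `|f(t,ψ(ξ)) − f_δ^K(t,ψ(ξ))| ≤ ι` for
all `t ∈ T` and `ξ ∈ K`. -/
theorem infConv_approx_after_reparametrization
    {T E : Type*} [Fintype T] [Nonempty T]
    [MetricSpace E] [MeasurableSpace E] [BorelSpace E]
    (K : Set E) (hKc : IsCompact K) (hKne : K.Nonempty)
    (M : ℝ) (hM : 0 < M) (f : T → E → ℝ)
    (hlsc : ∀ t, LowerSemicontinuous (f t))
    (h0 : ∀ t, ∀ ξ ∈ K, 0 ≤ f t ξ) (hM' : ∀ t, ∀ ξ ∈ K, f t ξ ≤ M)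
    (ι : ℝ) (hι : 0 < ι) (r : ℝ) (hr : 0 < r) :
    ∃ δ : ℝ, 0 < δ ∧ ∃ ψ : E → E, Measurable ψ ∧ Set.MapsTo ψ K K ∧
      (∀ ξ ∈ K, dist (ψ ξ) ξ ≤ r) ∧
      ∀ t : T, ∀ ξ ∈ K,
        |f t (ψ ξ) - ⨅ ξ' : K, (f t ξ' + dist (ξ' : E) (ψ ξ) ^ 2 / δ)| ≤ ι := by
  obtain ⟨x₀, hx₀⟩ := hKne
  -- finite subcover by balls of radius r centered in K
  obtain ⟨s, hs⟩ := hKc.elim_finite_subcover (fun x : K => Metric.ball (x : E) r)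
    (fun _ => Metric.isOpen_ball)
    (fun ξ hξ => Set.mem_iUnion.2 ⟨⟨ξ, hξ⟩, Metric.mem_ball_self hr⟩)
  -- lower semicontinuity radii
  have hε : ∀ t : T, ∀ x : K, ∃ ε > 0, ∀ ξ' : E, dist ξ' (x : E) < ε →
      f t (x : E) - ι < f t ξ' := by
    intro t x
    have h1 : f t (x : E) - ι < f t (x : E) := by linarith
    have := hlsc t (x : E) _ h1
    rw [Metric.eventually_nhds_iff] at this
    obtain ⟨ε, εpos, hball⟩ := this
    exact ⟨ε, εpos, fun ξ' hξ' => hball hξ'⟩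
  choose ε εpos hεspec using hε
  classical
  set s' : Finset K := insert ⟨x₀, hx₀⟩ s with hs'def
  have hs'ne : s'.Nonempty := ⟨_, Finset.mem_insert_self _ _⟩
  have hTne : (Finset.univ : Finset T).Nonempty := Finset.univ_nonempty
  set ε₀ : ℝ := s'.inf' hs'ne (fun x => Finset.univ.inf' hTne (fun t => ε t x)) with hε₀def
  have hε₀pos : 0 < ε₀ := by
    rw [hε₀def, Finset.lt_inf'_iff]
    intro x _
    rw [Finset.lt_inf'_iff]
    intro t _
    exact εpos t x
  have hε₀le : ∀ t : T, ∀ x ∈ s', ε₀ ≤ ε t x := by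
    intro t x hx
    calc ε₀ ≤ Finset.univ.inf' hTne (fun t => ε t x) := Finset.inf'_le _ hx
      _ ≤ ε t x := Finset.inf'_le _ (Finset.mem_univ t)
  refine ⟨ε₀ ^ 2 / M, div_pos (pow_pos hε₀pos 2) hM, ?_⟩
  set δ : ℝ := ε₀ ^ 2 / M with hδdef
  have hδpos : 0 < δ := div_pos (pow_pos hε₀pos 2) hM
  -- the reparametrization map
  set l : List E := s.toList.map (fun x : K => (x : E)) with hldef
  -- membership facts
  have hψmem : ∀ ξ : E, ∃ h : pickAux r x₀ l ξ ∈ K, (⟨pickAux r x₀ l ξ, h⟩ : K) ∈ s' := by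
    intro ξ
    rcases List.mem_cons.1 (pickAux_mem r x₀ l ξ) with h | h
    · refine ⟨by rw [h]; exact hx₀, ?_⟩
      rw [hs'def]
      exact Finset.mem_insert.2 (Or.inl (by ext; exact h))
    · rw [hldef] at h
      obtain ⟨x, hxs, hxe⟩ := List.mem_map.1 h
      have hK2 : pickAux r x₀ l ξ ∈ K := by rw [← hxe]; exact x.2
      refine ⟨hK2, ?_⟩
      rw [hs'def]
      refine Finset.mem_insert.2 (Or.inr ?_)
      have : x = ⟨pickAux r x₀ l ξ, hK2⟩ := by ext; exact hxe
      rw [← this]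
      exact Finset.mem_toList.1 hxs
  have hcover : ∀ ξ ∈ K, ∃ x ∈ l, dist ξ x < r := by
    intro ξ hξ
    obtain ⟨x, hxs, hxb⟩ := Set.mem_iUnion₂.1 (hs hξ)
    exact ⟨(x : E), List.mem_map.2 ⟨x, Finset.mem_toList.2 hxs, rfl⟩, hxb⟩
  refine ⟨pickAux r x₀ l, pickAux_measurable r x₀ l, fun ξ _ => (hψmem ξ).1, ?_, ?_⟩
  · intro ξ hξ
    exact le_of_lt (pickAux_dist r x₀ l ξ (hcover ξ hξ))
  · intro t ξ hξ
    have : Nonempty K := ⟨⟨x₀, hx₀⟩⟩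
    obtain ⟨hyK, hys'⟩ := hψmem ξ
    set y : E := pickAux r x₀ l ξ with hydef
    -- bounds for the infimum
    have hbdd : BddBelow (Set.range fun ξ' : K => f t (ξ' : E) + dist (ξ' : E) y ^ 2 / δ) := by
      refine ⟨0, ?_⟩
      rintro _ ⟨ξ', rfl⟩
      have := h0 t ξ' ξ'.2
      positivity
    have hupper : (⨅ ξ' : K, (f t ξ' + dist (ξ' : E) y ^ 2 / δ)) ≤ f t y := by
      have := ciInf_le hbdd (⟨y, hyK⟩ : K)
      simpa using this
    have hlower : f t y - ι ≤ ⨅ ξ' : K, (f t ξ' + dist (ξ' : E) y ^ 2 / δ) := by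
      refine le_ciInf fun ξ' => ?_
      by_cases hd : dist (ξ' : E) y < ε t ⟨y, hyK⟩
      · have h1 := hεspec t ⟨y, hyK⟩ ξ' hd
        have h2 : 0 ≤ dist (ξ' : E) y ^ 2 / δ := by positivity
        simp only at h1
        linarith
      · push_neg at hd
        have h1 : ε₀ ≤ dist (ξ' : E) y := le_trans (hε₀le t _ hys') hd
        have h2 : ε₀ ^ 2 ≤ dist (ξ' : E) y ^ 2 :=
          pow_le_pow_left₀ (le_of_lt hε₀pos) h1 2
        have h3 : M ≤ dist (ξ' : E) y ^ 2 / δ := by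
          have heq : ε₀ ^ 2 / δ = M := by
            rw [hδdef]; field_simp
          calc M = ε₀ ^ 2 / δ := heq.symm
            _ ≤ dist (ξ' : E) y ^ 2 / δ := by gcongr
        have h4 : 0 ≤ f t ξ' := h0 t ξ' ξ'.2
        have h5 : f t y ≤ M := hM' t y hyK
        linarith
    rw [abs_le]
    constructor <;> linarith
end

section
/- (Universal approximation of l.s.c. functions up to small reparametrization.) Let E be a metric space, 𝒯 a finite nonempty set, and 𝔑 a nonempty family of functions g : 𝒯 × E → [0,∞) with g(t,·) continuous for every t ∈ 𝒯, satisfying the universal approximation property: for every h : 𝒯 × E → [0,∞) with h(t,·) continuous for all t, every compact K ⊆ E and every ι > 0 there exists g ∈ 𝔑 with sup_{t∈𝒯} sup_{ξ∈K} |h(t,ξ) − g(t,ξ)| ≤ ι. Let K ⊆ E be a nonempty compact set, M > 0, and f : 𝒯 × E → ℝ with f(t,·) lower semicontinuous for every t ∈ 𝒯 and 0 ≤ f(t,ξ) ≤ M for all (t,ξ) ∈ 𝒯 × K. Then for every ι > 0 and every r > 0 there exist g ∈ 𝔑 and a Borel measurable map ψ : K → K with sup_{ξ∈K} dist(ψ(ξ),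 ξ) ≤ r such that for all t ∈ 𝒯 and all ξ ∈ K, |f(t,ψ(ξ)) − g(t,ψ(ξ))| ≤ ι. -/
/-!
Since `ψ` may move points by up to `r`, it can collapse `K` onto a finite `r`-net `S ⊆ K`
(taking each point to its nearest net point, a simple function). On the finite, hence closed
and discrete, set `S` the function `f` has a continuous nonnegative extension by Tietze, and any
`g ∈ 𝔑` approximating that extension on `K` approximates `f` along `ψ`.
-/

open Set MeasureTheory

theorem Set.Finite.exists_continuous_nonneg_eqOn {X : Type*} [TopologicalSpace X] [T1Space X]
    [NormalSpace X] {S : Set X} (hS : S.Finite) (v : X → ℝ) (hv : ∀ x ∈ S, 0 ≤ v x) :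
    ∃ h : X → ℝ, Continuous h ∧ (∀ x, 0 ≤ h x) ∧ EqOn h v S := by
  have : Finite S := hS
  obtain ⟨h, hh0, hhv⟩ := ContinuousMap.exists_restrict_eq_forall_mem_of_closed
    ⟨S.domRestrict v, continuous_of_discreteTopology⟩ (t := Ici 0) (fun x => hv x x.2)
    nonempty_Ici hS.isClosed
  exact ⟨h, h.continuous, hh0, fun x hx => congr($hhv ⟨x, hx⟩)⟩

theorem IsCompact.exists_measurable_mapsTo_finite {E : Type*} [PseudoMetricSpace E]
    [MeasurableSpace E] [OpensMeasurableSpace E] {K : Set E} (hK : IsCompact K) {r : ℝ}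
    (hr : 0 < r) :
    ∃ S : Set E, S.Finite ∧ S ⊆ K ∧ ∃ ψ : E → E, Measurable ψ ∧ MapsTo ψ K S ∧
      ∀ ξ ∈ K, dist (ψ ξ) ξ < r := by
  rcases K.eq_empty_or_nonempty with rfl | ⟨ξ₀, hξ₀⟩
  · exact ⟨∅, finite_empty, empty_subset _, id, measurable_id, mapsTo_empty _ _, by simp⟩
  obtain ⟨s, hsK, hs, hcover⟩ := finite_cover_balls_of_compact hK hr
  set L := hs.toFinset.toList
  -- `e` enumerates the net, padded with `ξ₀` so that its values stay in `K`.
  set e : ℕ → E := fun n => L.getD n ξ₀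
  have he : ∀ n, e n ∈ K := fun n => by
    simp only [e, List.getD_eq_getElem?_getD]
    cases hn : L[n]? with
    | none => exact hξ₀
    | some a => exact hsK (hs.mem_toFinset.mp (Finset.mem_toList.mp (List.mem_of_getElem? hn)))
  refine ⟨e '' Iic L.length, (finite_Iic _).image e, image_subset_iff.mpr fun n _ => he n,
    SimpleFunc.nearestPt e L.length, (SimpleFunc.nearestPt e L.length).measurable,
    fun ξ _ => ⟨_, SimpleFunc.nearestPtInd_le e L.length ξ, rfl⟩, fun ξ hξ => ?_⟩
  obtain ⟨a, has, hξa⟩ := mem_iUnion₂.mp (hcover hξ)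
  obtain ⟨k, hk, rfl⟩ := List.getElem_of_mem (Finset.mem_toList.mpr (hs.mem_toFinset.mpr has))
  have hek : e k = L[k] := List.getD_eq_getElem _ _ hk
  refine edist_lt_ofReal.mp ((SimpleFunc.edist_nearestPt_le e ξ hk.le).trans_lt ?_)
  rw [hek, edist_lt_ofReal, dist_comm]
  exact hξa

theorem lsc_universal_approximation_general
    {T E : Type*}
    [MetricSpace E] [MeasurableSpace E] [BorelSpace E]
    (𝔑 : Set (T → E → ℝ))
    (hUAP : ∀ h : T → E → ℝ, (∀ t, Continuous (h t)) → (∀ t (ξ : E), 0 ≤ h t ξ) →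
      ∀ K : Set E, IsCompact K → ∀ ι : ℝ, 0 < ι →
      ∃ g ∈ 𝔑, ∀ t : T, ∀ ξ ∈ K, |h t ξ - g t ξ| ≤ ι)
    (K : Set E) (hKc : IsCompact K)
    (f : T → E → ℝ)
    (h0 : ∀ t, ∀ ξ ∈ K, 0 ≤ f t ξ)
    (ι : ℝ) (hι : 0 < ι) (r : ℝ) (hr : 0 < r) :
    ∃ g ∈ 𝔑, ∃ ψ : E → E, Measurable ψ ∧ Set.MapsTo ψ K K ∧
      (∀ ξ ∈ K, dist (ψ ξ) ξ ≤ r) ∧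
      ∀ t : T, ∀ ξ ∈ K, |f t (ψ ξ) - g t (ψ ξ)| ≤ ι := by
  obtain ⟨S, hSfin, hSK, ψ, hψ, hψS, hψr⟩ := hKc.exists_measurable_mapsTo_finite hr
  choose h hhc hh0 hhf using fun t =>
    hSfin.exists_continuous_nonneg_eqOn (f t) fun x hx => h0 t x (hSK hx)
  obtain ⟨g, hg𝔑, hg⟩ := hUAP h hhc hh0 K hKc ι hι
  refine ⟨g, hg𝔑, ψ, hψ, fun ξ hξ => hSK (hψS hξ), fun ξ hξ => (hψr ξ hξ).le,
    fun t ξ hξ => ?_⟩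
  rw [← hhf t (hψS hξ)]
  exact hg t _ (hSK (hψS hξ))

/-- **Universal approximation of l.s.c. functions up to small reparametrization**
(Theorem 5.5).

Let `E` be a metric space, `T` finite nonempty, and `𝔑` a nonempty family of functions
`g : T × E → [0,∞)` with `g(t,·)` continuous, satisfying the universal approximation
property: every `h : T × E → [0,∞)` continuous in space can be approximated uniformly on
every compact `K ⊆ E` within any `ι > 0` by some `g ∈ 𝔑`.  Let `K ⊆ E` be nonempty
compact, `M > 0`, and `f : T × E → ℝ` with `f(t,·)` lower semicontinuous and `0 ≤ f ≤ M`
on `T × K`.  Then for every `ι > 0` and `r > 0` there exist `g ∈ 𝔑` and a Borel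
measurable map `ψ : K → K` moving points by at most `r` with
`|f(t,ψ(ξ)) − g(t,ψ(ξ))| ≤ ι` for all `t ∈ T`, `ξ ∈ K`. -/
theorem lsc_universal_approximation
    {T E : Type*} [Fintype T] [Nonempty T]
    [MetricSpace E] [MeasurableSpace E] [BorelSpace E]
    (𝔑 : Set (T → E → ℝ)) (h𝔑ne : 𝔑.Nonempty)
    (h𝔑 : ∀ g ∈ 𝔑, (∀ t, Continuous (g t)) ∧ ∀ t (ξ : E), 0 ≤ g t ξ)
    (hUAP : ∀ h : T → E → ℝ, (∀ t, Continuous (h t)) → (∀ t (ξ : E), 0 ≤ h t ξ) →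
      ∀ K : Set E, IsCompact K → ∀ ι : ℝ, 0 < ι →
      ∃ g ∈ 𝔑, ∀ t : T, ∀ ξ ∈ K, |h t ξ - g t ξ| ≤ ι)
    (K : Set E) (hKc : IsCompact K) (hKne : K.Nonempty)
    (M : ℝ) (hM : 0 < M) (f : T → E → ℝ)
    (hlsc : ∀ t, LowerSemicontinuous (f t))
    (h0 : ∀ t, ∀ ξ ∈ K, 0 ≤ f t ξ) (hM' : ∀ t, ∀ ξ ∈ K, f t ξ ≤ M)
    (ι : ℝ) (hι : 0 < ι) (r : ℝ) (hr : 0 < r) :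
    ∃ g ∈ 𝔑, ∃ ψ : E → E, Measurable ψ ∧ Set.MapsTo ψ K K ∧
      (∀ ξ ∈ K, dist (ψ ξ) ξ ≤ r) ∧
      ∀ t : T, ∀ ξ ∈ K, |f t (ψ ξ) - g t (ψ ξ)| ≤ ι :=
  lsc_universal_approximation_general 𝔑 hUAP K hKc f h0 ι hι r hr
end

section
/- (Convergence of the neural optimal stopping boundary method, continuous case.) Assume: (i) the conditional absolute continuity assumption with moduli (ρ_t)_{t∈𝒯} such that ρ(ι) := Σ_{t∈𝒯} ρ_t(ι) → 0 as ι → 0; (ii) Φ = Σ_{t∈𝒯}|Y_t| is square-integrable; (iii) tightness: for every δ > 0 there is a compact K ⊆ E with Q(Ξ(X_t) ∈ K for all t ∈ 𝒯) ≥ 1 − δ; (iv) 𝔑 is a nonempty family of functions g : 𝒯 × E → [0,∞) with g(t,·) continuous for all t, satisfying the universal approximation property: for every h : 𝒯 × E → [0,∞) with h(t,·) continuous for all t, every compact K ⊆ E and every ι > 0 there exists g ∈ 𝔑 with sup_{𝒯×K} |h − g| ≤ ι; and (v) f⋄ : 𝒯 × E → [0,∞) is a boundary with f⋄(t,·) continuous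 for all t. Then for every δ > 0 there exist ε > 0 and γ > 0 such that every g ∈ 𝔑 satisfying v(μ_g^ε) ≥ sup_{g'∈𝔑} v(μ_{g'}^ε) − γ also satisfies v(τ_g) ≥ v(τ_{f⋄}) − δ. -/
/-!
Off the event where some `g(t, Ξ(X_t)) - α(X_t)` falls in `(0, ε)`, the `ε`-relaxed weights of
a boundary `g` are `0` or `1` and reproduce its hitting time `τ_g`; by the conditional absolute
continuity this event has probability at most `ρ(ε)`, and since every payoff is dominated by the
integrable `Φ = Σ_t |Y_t|`, `v(μ_g^ε)` and `v(τ_g)` are close. In the same way, if `g∘ ∈ 𝔑` is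
uniformly `ι`-close to `f⋄` on a compact `K` that the path leaves with small probability, then
off `{Ξ(X_t) ∉ K}` and a band of width `ε + 2ι` around `f⋄` the relaxed weights of `g∘`
reproduce `τ_{f⋄}`, so `v(μ_{g∘}^ε)` is close to `v(τ_{f⋄})`. A `γ`-maximiser `g` then satisfies
`v(τ_g) ≈ v(μ_g^ε) ≥ v(μ_{g∘}^ε) - γ ≈ v(τ_{f⋄}) - γ`.
-/

open MeasureTheory
open scoped ENNReal NNReal Classical

/-- Reward collected at a (possibly infinite) stopping date: `Y t ω` if `τ = t ∈ T`, and `0`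
if `τ = ∞` (that is, `Y_τ 1_{τ ≠ ∞}`). -/
noncomputable def hitReward {T Ω : Type*} (Y : T → Ω → ℝ) (τ : WithTop T) (ω : Ω) : ℝ :=
  WithTop.recTopCoe 0 (fun t => Y t ω) τ

open Finset Filter Topology

section StopWeight

variable {T : Type*} [Fintype T] [LinearOrder T]

theorem stopWeight_eq (p : T → ℝ) (t : T) :
    stopWeight p t = p t * (1 - ∑ s ∈ univ.filter (· < t), stopWeight p s) := by
  rw [stopWeight, sum_attach]

theorem one_sub_sum_stopWeight_eq_prod (p : T → ℝ) (t : T) :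
    1 - ∑ s ∈ univ.filter (· < t), stopWeight p s = ∏ s ∈ univ.filter (· < t), (1 - p s) := by
  suffices h : ∀ S : Finset T, (∀ s ∈ S, ∀ s' < s, s' ∈ S) →
      1 - ∑ s ∈ S, stopWeight p s = ∏ s ∈ S, (1 - p s) from
    h _ fun s hs s' hs' => by
      simp only [mem_filter, mem_univ, true_and] at hs ⊢; exact hs'.trans hs
  intro S
  induction S using Finset.induction_on_max with
  | empty => simp
  | insert a S hlt ih =>
    intro hclosed
    have ha : a ∉ S := fun h => lt_irrefl a (hlt a h)
    have hbelow : univ.filter (· < a) = S := by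
      ext s
      simp only [mem_filter, mem_univ, true_and]
      refine ⟨fun hs => ?_, hlt s⟩
      exact (mem_insert.mp (hclosed a (mem_insert_self a S) s hs)).resolve_left hs.ne
    have hS : ∀ s ∈ S, ∀ s' < s, s' ∈ S := fun s hs s' hs' =>
      (mem_insert.mp (hclosed s (mem_insert_of_mem hs) s' hs')).resolve_left
        (hs'.trans (hlt s hs)).ne
    rw [sum_insert ha, prod_insert ha, ← ih hS, stopWeight_eq, hbelow]
    ring

theorem stopWeight_eq_mul_prod (p : T → ℝ) (t : T) :
    stopWeight p t = p t * ∏ s ∈ univ.filter (· < t), (1 - p s) := by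
  rw [stopWeight_eq, one_sub_sum_stopWeight_eq_prod]

theorem stopWeight_mem_Icc {p : T → ℝ} (hp : ∀ t, p t ∈ Set.Icc 0 1) (t : T) :
    stopWeight p t ∈ Set.Icc 0 1 := by
  have h0 (s : T) : 0 ≤ 1 - p s := sub_nonneg.mpr (hp s).2
  have h1 (s : T) : 1 - p s ≤ 1 := by linarith [(hp s).1]
  rw [stopWeight_eq_mul_prod]
  exact ⟨mul_nonneg (hp t).1 (prod_nonneg fun s _ => h0 s),
    mul_le_one₀ (hp t).2 (prod_nonneg fun s _ => h0 s)
      (prod_le_one (fun s _ => h0 s) fun s _ => h1 s)⟩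

theorem measurable_stopWeight {Ω : Type*} [MeasurableSpace Ω] {p : T → Ω → ℝ}
    (hp : ∀ t, Measurable (p t)) (t : T) : Measurable fun ω => stopWeight (fun s => p s ω) t := by
  simp_rw [stopWeight_eq_mul_prod]
  exact (hp t).mul (Finset.measurable_prod _ fun s _ => measurable_const.sub (hp s))

theorem firstHit_eq_coe_iff {X : Type*} (S : T → Set X) (x : T → X) (t : T) :
    firstHit S x = t ↔ x t ∈ S t ∧ ∀ s < t, x s ∉ S s := by
  constructor
  · intro h
    refine ⟨(mem_filter.mp (mem_of_min h)).2, fun s hst hs => ?_⟩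
    have : firstHit S x ≤ s := min_le (by simpa using hs)
    exact absurd (WithTop.coe_le_coe.mp (h ▸ this)) (not_le.mpr hst)
  · rintro ⟨ht, hmin⟩
    refine le_antisymm (min_le (by simpa using ht)) (Finset.le_min fun s hs => ?_)
    exact WithTop.coe_le_coe.mpr (not_lt.mp fun hst => hmin s hst (mem_filter.mp hs).2)

theorem stopWeight_ite_eq_ite_firstHit {X : Type*} (S : T → Set X) (x : T → X) (t : T) :
    stopWeight (fun s => if x s ∈ S s then 1 else 0) t = if firstHit S x = t then 1 else 0 := by
  simp only [stopWeight_eq_mul_prod, firstHit_eq_coe_iff]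
  by_cases hs : ∀ s < t, x s ∉ S s
  · rw [prod_eq_one fun s hst => by simp [hs s (mem_filter.mp hst).2]]
    by_cases ht : x t ∈ S t
    · rw [if_pos ht, if_pos ⟨ht, hs⟩, mul_one]
    · rw [if_neg ht, if_neg fun h => ht h.1, zero_mul]
  · obtain ⟨s, hst, hsS⟩ : ∃ s < t, x s ∈ S s := by simpa using hs
    rw [prod_eq_zero (i := s) (by simpa using hst) (by simp [hsS])]
    simp only [mul_zero, if_neg fun h : _ ∧ _ => hs h.2]

end StopWeight

section HitReward

variable {T Ω : Type*} [Fintype T]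

theorem hitReward_eq_sum [DecidableEq T] (Y : T → Ω → ℝ) (τ : WithTop T) (ω : Ω) :
    hitReward Y τ ω = ∑ t : T, if τ = t then Y t ω else 0 := by
  induction τ using WithTop.recTopCoe with
  | top => simp [hitReward]
  | coe t => simp [hitReward]

theorem abs_hitReward_le (Y : T → Ω → ℝ) (τ : WithTop T) (ω : Ω) :
    |hitReward Y τ ω| ≤ ∑ t, |Y t ω| := by
  induction τ using WithTop.recTopCoe with
  | top => simpa [hitReward] using sum_nonneg fun t _ => abs_nonneg (Y t ω)
  | coe t => exact single_le_sum (f := fun t => |Y t ω|) (fun _ _ => abs_nonneg _) (mem_univ t)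

theorem sum_stopWeight_ite_mul_eq_hitReward [LinearOrder T] {X : Type*} (S : T → Set X)
    (x : T → X) (Y : T → Ω → ℝ) (ω : Ω) :
    ∑ t, stopWeight (fun s => if x s ∈ S s then 1 else 0) t * Y t ω
      = hitReward Y (firstHit S x) ω := by
  simp [stopWeight_ite_eq_ite_firstHit, hitReward_eq_sum]

theorem measurable_hitReward_firstHit [LinearOrder T] [MeasurableSpace Ω] {X : Type*}
    [MeasurableSpace X] {Y : T → Ω → ℝ} (hY : ∀ t, Measurable (Y t)) {S : T → Set X}
    (hS : ∀ t, MeasurableSet (S t)) {x : T → Ω → X} (hx : ∀ t, Measurable (x t)) :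
    Measurable fun ω => hitReward Y (firstHit S fun t => x t ω) ω := by
  simp_rw [hitReward_eq_sum, firstHit_eq_coe_iff]
  refine Finset.measurable_sum _ fun t _ => Measurable.ite ?_ (hY t) measurable_const
  simp only [Set.ofPred_and, Set.ofPred_forall]
  exact (hx t (hS t)).inter (.iInter fun s => .iInter fun _ => (hx s (hS s)).compl)

end HitReward

theorem relaxChi_mem_Icc (ε : ℝ) (u : ℝ≥0∞) : relaxChi ε u ∈ Set.Icc 0 1 := by
  unfold relaxChi
  split_ifs
  · simp
  · exact ⟨le_min zero_le_one (le_max_left _ _), min_le_left _ _⟩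

theorem measurable_relaxChi (ε : ℝ) : Measurable (relaxChi ε) :=
  Measurable.ite (measurableSet_singleton ⊤) measurable_const (by fun_prop)

theorem relaxChi_coe_sub (ε : ℝ) (a b : ℝ≥0) :
    relaxChi ε ((b : ℝ≥0∞) - a) = min 1 (max 0 (1 - ((b - a : ℝ≥0) : ℝ) / ε)) := by
  rw [← ENNReal.coe_sub, relaxChi, if_neg ENNReal.coe_ne_top, ENNReal.coe_toReal]

theorem relaxChi_coe_sub_of_le (ε : ℝ) {a b : ℝ≥0} (h : b ≤ a) :
    relaxChi ε ((b : ℝ≥0∞) - a) = 1 := by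
  simp [relaxChi_coe_sub, tsub_eq_zero_of_le h]

theorem relaxChi_coe_sub_of_add_le {ε : ℝ} (hε : 0 < ε) {a b : ℝ≥0} (h : (a : ℝ) + ε ≤ b) :
    relaxChi ε ((b : ℝ≥0∞) - a) = 0 := by
  have hab : a ≤ b := NNReal.coe_le_coe.mp (by linarith)
  rw [relaxChi_coe_sub, NNReal.coe_sub hab,
    max_eq_left (by rw [sub_nonpos, one_le_div hε]; linarith), min_eq_right zero_le_one]

theorem relaxChi_coe_sub_eq_ite {ε ι : ℝ} (hε : 0 < ε) {a b c : ℝ≥0} (hbc : |(c : ℝ) - b| ≤ ι)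
    (h : ¬ ((a : ℝ) < c + ι ∧ (c : ℝ) < a + ε + ι)) :
    relaxChi ε ((b : ℝ≥0∞) - a) = if c ≤ a then 1 else 0 := by
  have hbc := abs_le.mp hbc
  by_cases hca : (a : ℝ) < c + ι
  · have hac : (a : ℝ) + ε + ι ≤ c := not_lt.mp (not_and.mp h hca)
    rw [if_neg (NNReal.coe_lt_coe.mp (by linarith)).not_ge,
      relaxChi_coe_sub_of_add_le hε (by linarith)]
  · rw [if_pos (NNReal.coe_le_coe.mp (by linarith)),
      relaxChi_coe_sub_of_le ε (NNReal.coe_le_coe.mp (by linarith))]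

section Integral

variable {Ω : Type*} [MeasurableSpace Ω] {μ : Measure Ω}

theorem abs_integral_sub_le_of_eqOn_compl {f₁ f₂ Φ : Ω → ℝ} {B : Set Ω}
    (hf₁ : Integrable f₁ μ) (hf₂ : Integrable f₂ μ) (hΦ : Integrable Φ μ)
    (h₁ : ∀ ω, |f₁ ω| ≤ Φ ω) (h₂ : ∀ ω, |f₂ ω| ≤ Φ ω) (heq : ∀ ω ∉ B, f₁ ω = f₂ ω) :
    |∫ ω, f₁ ω ∂μ - ∫ ω, f₂ ω ∂μ| ≤ 2 * ∫ ω in B, Φ ω ∂μ := by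
  rw [← Real.norm_eq_abs, ← integral_sub hf₁ hf₂,
    ← setIntegral_eq_integral_of_forall_compl_eq_zero (μ := μ)
      fun ω hω => sub_eq_zero.mpr (heq ω hω),
    ← integral_const_mul (μ := μ.restrict B) 2]
  refine norm_integral_le_of_norm_le (hΦ.integrableOn.const_mul 2) (ae_of_all _ fun ω => ?_)
  calc |f₁ ω - f₂ ω| ≤ |f₁ ω| + |f₂ ω| := abs_sub _ _
    _ ≤ 2 * Φ ω := by linarith [h₁ ω, h₂ ω]

theorem exists_pos_forall_measureReal_le_setIntegral_le [IsFiniteMeasure μ] {f : Ω → ℝ}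
    (hf : Integrable f μ) {δ : ℝ} (hδ : 0 < δ) :
    ∃ η > 0, ∀ s, μ.real s ≤ η → ∫ x in s, f x ∂μ ≤ δ := by
  have hμ : Tendsto (μ ∘ id) (comap μ.real (𝓝 0)) (𝓝 0) := by
    simpa [Function.comp_def, ofReal_measureReal] using
      ENNReal.tendsto_ofReal (tendsto_comap (f := μ.real) (x := 𝓝 0))
  obtain ⟨η, hη, hsmall⟩ := Metric.eventually_nhds_iff.mp
    (eventually_comap.mp ((hf.tendsto_setIntegral_nhds_zero hμ).eventually (gt_mem_nhds hδ)))
  refine ⟨η / 2, half_pos hη, fun s hs => (hsmall ?_ s rfl).le⟩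
  rw [Real.dist_eq, sub_zero, abs_of_nonneg measureReal_nonneg]
  linarith

end Integral

theorem measureReal_mem_Ico_le {Ω E : Type*} [MeasurableSpace Ω] [MeasurableSpace E]
    {Q : Measure Ω} [IsFiniteMeasure Q] {A : Ω → ℝ≥0} {Z : Ω → E} {r : ℝ≥0∞ → ℝ}
    (hAC : ∀ g : E → ℝ≥0∞, Measurable g → ∀ ι : ℝ≥0∞, 0 < ι →
      Q.real {ω | g (Z ω) ≤ A ω ∧ (A ω : ℝ≥0∞) < g (Z ω) + ι} ≤ r ι)
    {h : E → ℝ} (hh : Measurable h) {w : ℝ} (hw : 0 < w) :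
    Q.real {ω | (A ω : ℝ) ∈ Set.Ico (h (Z ω)) (h (Z ω) + w)} ≤ r (ENNReal.ofReal w) := by
  have hsub : {ω | (A ω : ℝ) ∈ Set.Ico (h (Z ω)) (h (Z ω) + w)} ⊆
      {ω | ENNReal.ofReal (h (Z ω)) ≤ A ω ∧
        (A ω : ℝ≥0∞) < ENNReal.ofReal (h (Z ω)) + ENNReal.ofReal w} := by
    rintro ω ⟨hlo, hhi⟩
    refine ⟨by simpa using ENNReal.ofReal_le_ofReal hlo, ?_⟩
    calc (A ω : ℝ≥0∞) = ENNReal.ofReal (A ω) := ENNReal.ofReal_coe_nnreal.symm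
      _ < ENNReal.ofReal (h (Z ω) + w) :=
        (ENNReal.ofReal_lt_ofReal_iff (by linarith [(A ω).coe_nonneg])).mpr hhi
      _ ≤ ENNReal.ofReal (h (Z ω)) + ENNReal.ofReal w := ENNReal.ofReal_add_le
  exact (measureReal_mono hsub).trans
    (hAC _ (ENNReal.measurable_ofReal.comp hh) _ (ENNReal.ofReal_pos.mpr hw))

section Payoff

variable {T Ω X E : Type*} [Fintype T] [LinearOrder T]
  (α : X → ℝ≥0) (Ξ : X → E) (Xp : T → Ω → X) (Y : T → Ω → ℝ)

/-- The integrand of the relaxed value `v(μ_b^ε)`. -/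
noncomputable def relaxedPayoff (ε : ℝ) (b : T → E → ℝ≥0) (ω : Ω) : ℝ :=
  ∑ t, stopWeight (fun s => relaxChi ε ((b s (Ξ (Xp s ω)) : ℝ≥0∞) - (α (Xp s ω) : ℝ≥0∞))) t *
    Y t ω

/-- The integrand of the hitting value `v(τ_b)`. -/
noncomputable def hitPayoff (b : T → E → ℝ≥0) (ω : Ω) : ℝ :=
  hitReward Y (firstHit (fun t => {x | b t (Ξ x) ≤ α x}) (fun t => Xp t ω)) ω

theorem abs_relaxedPayoff_le (ε : ℝ) (b : T → E → ℝ≥0) (ω : Ω) :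
    |relaxedPayoff α Ξ Xp Y ε b ω| ≤ ∑ t, |Y t ω| := by
  refine (abs_sum_le_sum_abs _ _).trans (sum_le_sum fun t _ => ?_)
  obtain ⟨hq0, hq1⟩ := stopWeight_mem_Icc
    (fun s => relaxChi_mem_Icc ε ((b s (Ξ (Xp s ω)) : ℝ≥0∞) - α (Xp s ω))) t
  rw [abs_mul, abs_of_nonneg hq0]
  exact mul_le_of_le_one_left (abs_nonneg _) hq1

theorem abs_hitPayoff_le (b : T → E → ℝ≥0) (ω : Ω) :
    |hitPayoff α Ξ Xp Y b ω| ≤ ∑ t, |Y t ω| :=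
  abs_hitReward_le Y _ ω

theorem bddAbove_range_integral_relaxedPayoff [MeasurableSpace Ω] {Q : Measure Ω}
    (hΦ : Integrable (fun ω => ∑ t, |Y t ω|) Q) (ε : ℝ) (𝔅 : Set (T → E → ℝ≥0)) :
    BddAbove (Set.range fun b : 𝔅 => ∫ ω, relaxedPayoff α Ξ Xp Y ε b ω ∂Q) :=
  ⟨_, Set.forall_mem_range.mpr fun b => (Real.le_norm_self _).trans
    (norm_integral_le_of_norm_le hΦ (ae_of_all _ (abs_relaxedPayoff_le α Ξ Xp Y ε b)))⟩

variable {α Ξ Xp Y}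

theorem relaxedPayoff_eq_hitPayoff {ε : ℝ} {b c : T → E → ℝ≥0} {ω : Ω}
    (h : ∀ t, relaxChi ε ((b t (Ξ (Xp t ω)) : ℝ≥0∞) - (α (Xp t ω) : ℝ≥0∞)) =
      if c t (Ξ (Xp t ω)) ≤ α (Xp t ω) then 1 else 0) :
    relaxedPayoff α Ξ Xp Y ε b ω = hitPayoff α Ξ Xp Y c ω := by
  simp only [relaxedPayoff, hitPayoff, h]
  convert sum_stopWeight_ite_mul_eq_hitReward _ (fun t => Xp t ω) Y ω
  exact Iff.rfl

variable [MeasurableSpace Ω] [MeasurableSpace E]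

theorem exists_measureReal_le_and_relaxedPayoff_eq_hitPayoff (Q : Measure Ω) [IsFiniteMeasure Q]
    {ρ : T → ℝ≥0∞ → ℝ}
    (hAC : ∀ t (g : E → ℝ≥0∞), Measurable g → ∀ ι : ℝ≥0∞, 0 < ι →
      Q.real {ω | g (Ξ (Xp t ω)) ≤ (α (Xp t ω) : ℝ≥0∞) ∧
        (α (Xp t ω) : ℝ≥0∞) < g (Ξ (Xp t ω)) + ι} ≤ ρ t ι)
    {b c : T → E → ℝ≥0} (hc : ∀ t, Measurable (c t)) {K : Set E} {ε ι : ℝ} (hε : 0 < ε)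
    (hι : 0 ≤ ι) (hbc : ∀ t, ∀ ξ ∈ K, |(c t ξ : ℝ) - b t ξ| ≤ ι) :
    ∃ B : Set Ω,
      Q.real B ≤ ∑ t, ρ t (ENNReal.ofReal (ε + 2 * ι)) + Q.real {ω | ∀ t, Ξ (Xp t ω) ∈ K}ᶜ ∧
      ∀ ω ∉ B, relaxedPayoff α Ξ Xp Y ε b ω = hitPayoff α Ξ Xp Y c ω := by
  let band t := {ω | (α (Xp t ω) : ℝ) < c t (Ξ (Xp t ω)) + ι ∧
    (c t (Ξ (Xp t ω)) : ℝ) < α (Xp t ω) + ε + ι}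
  refine ⟨(⋃ t, band t) ∪ {ω | ∀ t, Ξ (Xp t ω) ∈ K}ᶜ, ?_, fun ω hω => ?_⟩
  · -- `band t` is the band of width `ε + 2ι` above `c - (ε + ι)`
    have hband (t : T) : Q.real (band t) ≤ ρ t (ENNReal.ofReal (ε + 2 * ι)) := by
      refine (measureReal_mono ?_).trans (measureReal_mem_Ico_le (hAC t)
        (h := fun ξ => (c t ξ : ℝ) - (ε + ι)) ((hc t).coe_nnreal_real.sub_const _) (by positivity))
      rintro ω ⟨hlo, hhi⟩
      exact ⟨by linarith, by linarith⟩
    calc _ ≤ Q.real (⋃ t, band t) + Q.real {ω | ∀ t, Ξ (Xp t ω) ∈ K}ᶜ :=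
          measureReal_union_le _ _
      _ ≤ _ := by
          gcongr
          exact (measureReal_iUnion_fintype_le _).trans (sum_le_sum fun t _ => hband t)
  · simp only [Set.mem_union, Set.mem_iUnion, Set.mem_compl_iff, not_or, not_exists,
      not_not] at hω
    exact relaxedPayoff_eq_hitPayoff fun t =>
      relaxChi_coe_sub_eq_ite hε (hbc t _ (hω.2 t)) (hω.1 t)

theorem exists_measureReal_le_and_relaxedPayoff_eq_hitPayoff_self (Q : Measure Ω)
    [IsFiniteMeasure Q] {ρ : T → ℝ≥0∞ → ℝ}
    (hAC : ∀ t (g : E → ℝ≥0∞), Measurable g → ∀ ι : ℝ≥0∞, 0 < ι →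
      Q.real {ω | g (Ξ (Xp t ω)) ≤ (α (Xp t ω) : ℝ≥0∞) ∧
        (α (Xp t ω) : ℝ≥0∞) < g (Ξ (Xp t ω)) + ι} ≤ ρ t ι)
    {b : T → E → ℝ≥0} (hb : ∀ t, Measurable (b t)) {ε : ℝ} (hε : 0 < ε) :
    ∃ B : Set Ω, Q.real B ≤ ∑ t, ρ t (ENNReal.ofReal ε) ∧
      ∀ ω ∉ B, relaxedPayoff α Ξ Xp Y ε b ω = hitPayoff α Ξ Xp Y b ω := by
  obtain ⟨B, hB, heq⟩ := exists_measureReal_le_and_relaxedPayoff_eq_hitPayoff Q (Y := Y) hAC hb hε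
    le_rfl (b := b) (K := Set.univ) fun t ξ _ => by simp
  exact ⟨B, by simpa using hB, heq⟩

variable [MeasurableSpace X]

theorem measurable_relaxedPayoff (hα : Measurable α) (hΞ : Measurable Ξ)
    (hX : ∀ t, Measurable (Xp t)) (hY : ∀ t, Measurable (Y t)) (ε : ℝ) {b : T → E → ℝ≥0}
    (hb : ∀ t, Measurable (b t)) : Measurable (relaxedPayoff α Ξ Xp Y ε b) := by
  refine Finset.measurable_sum _ fun t _ => .mul (measurable_stopWeight (fun s => ?_) t) (hY t)
  exact (measurable_relaxChi ε).comp
    ((hb s).coe_nnreal_ennreal.comp (hΞ.comp (hX s)) |>.sub (hα.comp (hX s)).coe_nnreal_ennreal)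

theorem measurable_hitPayoff (hα : Measurable α) (hΞ : Measurable Ξ)
    (hX : ∀ t, Measurable (Xp t)) (hY : ∀ t, Measurable (Y t)) {b : T → E → ℝ≥0}
    (hb : ∀ t, Measurable (b t)) : Measurable (hitPayoff α Ξ Xp Y b) :=
  measurable_hitReward_firstHit hY (fun t => measurableSet_le ((hb t).comp hΞ) hα) hX

theorem abs_integral_relaxedPayoff_sub_hitPayoff_le {Q : Measure Ω} (hα : Measurable α)
    (hΞ : Measurable Ξ) (hX : ∀ t, Measurable (Xp t)) (hY : ∀ t, Measurable (Y t))
    (hΦ : Integrable (fun ω => ∑ t, |Y t ω|) Q) {ε : ℝ} {b c : T → E → ℝ≥0}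
    (hb : ∀ t, Measurable (b t)) (hc : ∀ t, Measurable (c t)) {B : Set Ω}
    (heq : ∀ ω ∉ B, relaxedPayoff α Ξ Xp Y ε b ω = hitPayoff α Ξ Xp Y c ω) :
    |∫ ω, relaxedPayoff α Ξ Xp Y ε b ω ∂Q - ∫ ω, hitPayoff α Ξ Xp Y c ω ∂Q| ≤
      2 * ∫ ω in B, ∑ t, |Y t ω| ∂Q :=
  abs_integral_sub_le_of_eqOn_compl
    (hΦ.mono' (measurable_relaxedPayoff hα hΞ hX hY ε hb).aestronglyMeasurable
      (ae_of_all _ (abs_relaxedPayoff_le α Ξ Xp Y ε b)))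
    (hΦ.mono' (measurable_hitPayoff hα hΞ hX hY hc).aestronglyMeasurable
      (ae_of_all _ (abs_hitPayoff_le α Ξ Xp Y c)))
    hΦ (abs_relaxedPayoff_le α Ξ Xp Y ε b) (abs_hitPayoff_le α Ξ Xp Y c) heq

end Payoff

theorem neural_boundary_convergence_continuous_general
    {T Ω X E : Type*} [Fintype T] [LinearOrder T]
    [MeasurableSpace Ω]
    [MeasurableSpace X]
    [TopologicalSpace E] [T2Space E] [MeasurableSpace E] [BorelSpace E]
    (Q : Measure Ω) [IsProbabilityMeasure Q]
    (α : X → ℝ≥0) (hα : Measurable α) (Ξ : X → E) (hΞ : Measurable Ξ)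
    (Xp : T → Ω → X) (hX : ∀ t, Measurable (Xp t))
    (Y : T → Ω → ℝ) (hY : ∀ t, Measurable (Y t))
    (hΦ : Integrable (fun ω => (∑ t, |Y t ω|) ^ 2) Q)
    (ρ : T → ℝ≥0∞ → ℝ)
    -- (i) conditional absolute continuity assumption
    (hAC : ∀ t (g : E → ℝ≥0∞), Measurable g → ∀ ι : ℝ≥0∞, 0 < ι →
      (Q {ω | g (Ξ (Xp t ω)) ≤ (α (Xp t ω) : ℝ≥0∞) ∧
              (α (Xp t ω) : ℝ≥0∞) < g (Ξ (Xp t ω)) + ι}).toReal ≤ ρ t ι)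
    -- (i) ρ(ι) → 0 as ι → 0
    (hρ0 : Filter.Tendsto (fun ι : ℝ => ∑ t, ρ t (ENNReal.ofReal ι))
      (nhdsWithin 0 (Set.Ioi 0)) (nhds 0))
    -- (iii) tightness of the laws of (Ξ(X_t))
    (htight : ∀ δ : ℝ, 0 < δ → ∃ K : Set E, IsCompact K ∧
      1 - δ ≤ (Q {ω | ∀ t, Ξ (Xp t ω) ∈ K}).toReal)
    -- (iv) hypothesis space of continuous [0,∞)-valued boundaries
    (𝔑 : Set (T → E → ℝ≥0))
    (h𝔑c : ∀ g ∈ 𝔑, ∀ t, Continuous (g t))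
    -- (iv) universal approximation property
    (hUAP : ∀ h : T → E → ℝ≥0, (∀ t, Continuous (h t)) →
      ∀ K : Set E, IsCompact K → ∀ ι : ℝ, 0 < ι →
      ∃ g ∈ 𝔑, ∀ t : T, ∀ ξ ∈ K, |(h t ξ : ℝ) - (g t ξ : ℝ)| ≤ ι)
    -- (v) continuous optimal stopping boundary
    (fstar : T → E → ℝ≥0) (hfstar : ∀ t, Continuous (fstar t)) :
    ∀ δ : ℝ, 0 < δ → ∃ ε : ℝ, 0 < ε ∧ ∃ γ : ℝ, 0 < γ ∧
      ∀ g ∈ 𝔑,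
        -- g is a γ-maximizer of the relaxed value v(μ_·^ε) over 𝔑
        (⨆ g' : 𝔑, ∫ ω, (∑ t, stopWeight
            (fun s => relaxChi ε (((g' : T → E → ℝ≥0) s (Ξ (Xp s ω)) : ℝ≥0∞) -
              (α (Xp s ω) : ℝ≥0∞))) t * Y t ω) ∂Q) - γ ≤
          (∫ ω, (∑ t, stopWeight
            (fun s => relaxChi ε ((g s (Ξ (Xp s ω)) : ℝ≥0∞) -
              (α (Xp s ω) : ℝ≥0∞))) t * Y t ω) ∂Q) →
        -- then g is δ-optimal: v(τ_g) ≥ v(τ_{f⋄}) − δ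
        (∫ ω, hitReward Y
            (firstHit (fun t => {x | fstar t (Ξ x) ≤ α x}) (fun t => Xp t ω)) ω ∂Q) - δ ≤
          ∫ ω, hitReward Y
            (firstHit (fun t => {x | g t (Ξ x) ≤ α x}) (fun t => Xp t ω)) ω ∂Q := by
  intro δ hδ
  have hΦ₁ : Integrable (fun ω => ∑ t, |Y t ω|) Q :=
    ((memLp_two_iff_integrable_sq
      (Finset.measurable_sum _ fun t _ => (hY t).abs).aestronglyMeasurable).mpr hΦ).integrable
      one_le_two
  obtain ⟨η, hη, hsmall⟩ :=
    exists_pos_forall_measureReal_le_setIntegral_le hΦ₁ (by positivity : 0 < δ / 8)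
  obtain ⟨r, hr, hρr⟩ := (nhdsGT_basis (0 : ℝ)).eventually_iff.mp
    (hρ0.eventually_lt_const (half_pos hη))
  obtain ⟨K, hK, hKQ⟩ := htight (η / 2) (half_pos hη)
  obtain ⟨gs, hgs, hgsK⟩ := hUAP fstar hfstar K hK (r / 8) (by positivity)
  -- `ε = r/2` and `ι = r/8` keep both band widths `ε` and `ε + 2ι` below `r`; the error budget
  -- is `2 (δ/8) + 2 (δ/8) + δ/2 = δ`.
  refine ⟨r / 2, half_pos hr, δ / 2, half_pos hδ, fun g hg hmax => ?_⟩
  have hm (b : T → E → ℝ≥0) (hb : ∀ t, Continuous (b t)) t := (hb t).measurable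
  obtain ⟨B₁, hB₁, heq₁⟩ := exists_measureReal_le_and_relaxedPayoff_eq_hitPayoff Q (Y := Y) hAC
    (hm fstar hfstar) (half_pos hr) (by positivity) hgsK
  obtain ⟨B₂, hB₂, heq₂⟩ := exists_measureReal_le_and_relaxedPayoff_eq_hitPayoff_self Q (Y := Y)
    hAC (hm g (h𝔑c g hg)) (half_pos hr)
  have hKc : Q.real {ω | ∀ t, Ξ (Xp t ω) ∈ K}ᶜ ≤ η / 2 := by
    have hKm : MeasurableSet {ω | ∀ t, Ξ (Xp t ω) ∈ K} := by
      rw [Set.ofPred_forall]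
      exact .iInter fun t => hΞ.comp (hX t) hK.isClosed.measurableSet
    rw [probReal_compl_eq_one_sub hKm]
    linarith [show 1 - η / 2 ≤ Q.real {ω | ∀ t, Ξ (Xp t ω) ∈ K} from hKQ]
  have h₁ := abs_integral_relaxedPayoff_sub_hitPayoff_le hα hΞ hX hY hΦ₁ (hm gs (h𝔑c gs hgs))
    (hm fstar hfstar) heq₁
  have h₂ := abs_integral_relaxedPayoff_sub_hitPayoff_le hα hΞ hX hY hΦ₁ (hm g (h𝔑c g hg))
    (hm g (h𝔑c g hg)) heq₂
  have hB₁small := hsmall B₁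
    (by linarith [hρr (x := r / 2 + 2 * (r / 8)) ⟨by positivity, by linarith⟩])
  have hB₂small := hsmall B₂ (by linarith [hρr (x := r / 2) ⟨by positivity, by linarith⟩])
  have hsup := le_ciSup (bddAbove_range_integral_relaxedPayoff α Ξ Xp Y hΦ₁ (r / 2) 𝔑) ⟨gs, hgs⟩
  simp only [relaxedPayoff, hitPayoff] at h₁ h₂ hsup
  linarith [abs_le.mp h₁, abs_le.mp h₂]

/-- **Convergence of the neural optimal stopping boundary method, continuous case**
(Theorem 5.6).

Assume (i) the conditional absolute continuity assumption with moduli `(ρ_t)` and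
`ρ(ι) = Σ_t ρ_t(ι) → 0` as `ι → 0`; (ii) `Φ = Σ_t |Y_t|` square-integrable; (iii) tightness
of the laws of `(Ξ(X_t))`; (iv) `𝔑` a nonempty family of `[0,∞)`-valued boundaries,
continuous in space, with the universal approximation property on compact sets; and (v) a
continuous `[0,∞)`-valued optimal boundary `f⋄`.  Then for every `δ > 0` there are
`ε, γ > 0` such that every `γ`-maximizer `g ∈ 𝔑` of the relaxed value `v(μ_·^ε)` satisfies
`v(τ_g) ≥ v(τ_{f⋄}) − δ`. -/
theorem neural_boundary_convergence_continuous
    {T Ω X E : Type*} [Fintype T] [Nonempty T] [LinearOrder T]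
    [MeasurableSpace Ω]
    [TopologicalSpace X] [MeasurableSpace X] [BorelSpace X]
    [TopologicalSpace E] [T2Space E] [MeasurableSpace E] [BorelSpace E]
    (Q : Measure Ω) [IsProbabilityMeasure Q]
    (α : X → ℝ≥0) (hα : Measurable α) (Ξ : X → E) (hΞ : Measurable Ξ)
    (Xp : T → Ω → X) (hX : ∀ t, Measurable (Xp t))
    (Y : T → Ω → ℝ) (hY : ∀ t, Measurable (Y t))
    (hΦ : Integrable (fun ω => (∑ t, |Y t ω|) ^ 2) Q)
    (ρ : T → ℝ≥0∞ → ℝ) (hρ : ∀ t ι, ρ t ι ∈ Set.Icc (0 : ℝ) 1)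
    -- (i) conditional absolute continuity assumption
    (hAC : ∀ t (g : E → ℝ≥0∞), Measurable g → ∀ ι : ℝ≥0∞, 0 < ι →
      (Q {ω | g (Ξ (Xp t ω)) ≤ (α (Xp t ω) : ℝ≥0∞) ∧
              (α (Xp t ω) : ℝ≥0∞) < g (Ξ (Xp t ω)) + ι}).toReal ≤ ρ t ι)
    -- (i) ρ(ι) → 0 as ι → 0
    (hρ0 : Filter.Tendsto (fun ι : ℝ => ∑ t, ρ t (ENNReal.ofReal ι))
      (nhdsWithin 0 (Set.Ioi 0)) (nhds 0))
    -- (iii) tightness of the laws of (Ξ(X_t))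
    (htight : ∀ δ : ℝ, 0 < δ → ∃ K : Set E, IsCompact K ∧
      1 - δ ≤ (Q {ω | ∀ t, Ξ (Xp t ω) ∈ K}).toReal)
    -- (iv) hypothesis space of continuous [0,∞)-valued boundaries
    (𝔑 : Set (T → E → ℝ≥0)) (h𝔑ne : 𝔑.Nonempty)
    (h𝔑c : ∀ g ∈ 𝔑, ∀ t, Continuous (g t))
    -- (iv) universal approximation property
    (hUAP : ∀ h : T → E → ℝ≥0, (∀ t, Continuous (h t)) →
      ∀ K : Set E, IsCompact K → ∀ ι : ℝ, 0 < ι →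
      ∃ g ∈ 𝔑, ∀ t : T, ∀ ξ ∈ K, |(h t ξ : ℝ) - (g t ξ : ℝ)| ≤ ι)
    -- (v) continuous optimal stopping boundary
    (fstar : T → E → ℝ≥0) (hfstar : ∀ t, Continuous (fstar t)) :
    ∀ δ : ℝ, 0 < δ → ∃ ε : ℝ, 0 < ε ∧ ∃ γ : ℝ, 0 < γ ∧
      ∀ g ∈ 𝔑,
        -- g is a γ-maximizer of the relaxed value v(μ_·^ε) over 𝔑
        (⨆ g' : 𝔑, ∫ ω, (∑ t, stopWeight
            (fun s => relaxChi ε (((g' : T → E → ℝ≥0) s (Ξ (Xp s ω)) : ℝ≥0∞) -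
              (α (Xp s ω) : ℝ≥0∞))) t * Y t ω) ∂Q) - γ ≤
          (∫ ω, (∑ t, stopWeight
            (fun s => relaxChi ε ((g s (Ξ (Xp s ω)) : ℝ≥0∞) -
              (α (Xp s ω) : ℝ≥0∞))) t * Y t ω) ∂Q) →
        -- then g is δ-optimal: v(τ_g) ≥ v(τ_{f⋄}) − δ
        (∫ ω, hitReward Y
            (firstHit (fun t => {x | fstar t (Ξ x) ≤ α x}) (fun t => Xp t ω)) ω ∂Q) - δ ≤
          ∫ ω, hitReward Y
            (firstHit (fun t => {x | g t (Ξ x) ≤ α x}) (fun t => Xp t ω)) ω ∂Q :=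
  neural_boundary_convergence_continuous_general Q α hα Ξ hΞ Xp hX Y hY hΦ ρ hAC hρ0 htight 𝔑 h𝔑c
    hUAP fstar hfstar
end
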